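/- arXiv:0810.5083 — 10 statements merged into one kernel-verified Lean document; each statement's English description precedes it below -/
import Mathlib

section
/- For integers k, ℓ ≥ 0, let a_{k,ℓ} = Σ_{j=0}^{p^n-1} C(j,k)·C(j,ℓ) computed in F_p. Then a_{k,ℓ} = 0 if k + ℓ ≤ p^n - 2, and a_{k,ℓ} = (-1)^k if k + ℓ = p^n - 1. -/
/-!
Expanding `C(j, ℓ) = C(k + d, ℓ)` by Vandermonde and absorbing `C(j, k)` writes
`C(j, k) C(j, ℓ)` as a combination of `C(j, k + i)` with `i ≤ ℓ`, so summing over `j < N` by the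
hockey-stick identity leaves a combination of `C(N, k + i + 1)`. For `N = p ^ n` all of these
vanish mod `p` except `C(N, N) = 1`, which occurs only when `k + ℓ = N - 1`, with coefficient
`C(N - 1, k) ≡ (-1) ^ k`.
-/

open Finset

namespace Nat

theorem sum_range_choose_eq_choose_succ (N r : ℕ) :
    ∑ j ∈ range N, j.choose r = N.choose (r + 1) := by
  induction N with
  | zero => simp
  | succ N ih => rw [sum_range_succ, ih, choose_succ_succ', add_comm]

theorem choose_mul_choose_eq_sum (j k ℓ : ℕ) :
    j.choose k * j.choose ℓ =
      ∑ i ∈ range (ℓ + 1), j.choose (k + i) * ((k + i).choose k * k.choose (ℓ - i)) := by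
  rcases lt_or_ge j k with hjk | hkj
  · rw [choose_eq_zero_of_lt hjk, zero_mul]
    exact (sum_eq_zero fun i _ => by rw [choose_eq_zero_of_lt (by omega), zero_mul]).symm
  obtain ⟨d, rfl⟩ := Nat.exists_eq_add_of_le hkj
  have vandermonde : (k + d).choose ℓ = ∑ i ∈ range (ℓ + 1), d.choose i * k.choose (ℓ - i) := by
    rw [add_comm, add_choose_eq,
      Finset.Nat.sum_antidiagonal_eq_sum_range_succ (fun a b => d.choose a * k.choose b)]
  rw [vandermonde, mul_sum]
  refine sum_congr rfl fun i _ => ?_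
  have absorb := choose_mul (n := k + d) (k := k + i) (s := k) (le_add_right k i)
  rw [Nat.add_sub_cancel_left, Nat.add_sub_cancel_left] at absorb
  rw [← mul_assoc, ← mul_assoc, absorb]

theorem sum_range_choose_mul_choose (N k ℓ : ℕ) :
    ∑ j ∈ range N, j.choose k * j.choose ℓ =
      ∑ i ∈ range (ℓ + 1), N.choose (k + i + 1) * ((k + i).choose k * k.choose (ℓ - i)) := by
  simp_rw [choose_mul_choose_eq_sum _ k ℓ]
  rw [sum_comm]
  exact sum_congr rfl fun i _ => by rw [← sum_mul, sum_range_choose_eq_choose_succ]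

end Nat

section CharP

variable {R : Type*} [CommRing R] {p : ℕ} [CharP R p]

theorem cast_choose_prime_pow_eq_zero (hp : p.Prime) (n : ℕ) {r : ℕ} (hr₀ : r ≠ 0)
    (hrN : r ≠ p ^ n) : ((p ^ n).choose r : R) = 0 :=
  (CharP.cast_eq_zero_iff R p _).2 (hp.dvd_choose_pow hr₀ hrN)

theorem cast_choose_prime_pow_sub_one (hp : p.Prime) (n : ℕ) {k : ℕ} (hk : k < p ^ n) :
    ((p ^ n - 1).choose k : R) = (-1) ^ k := by
  induction k with
  | zero => simp
  | succ k ih =>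
    have pascal : (p ^ n).choose (k + 1) = (p ^ n - 1).choose k + (p ^ n - 1).choose (k + 1) := by
      conv_lhs => rw [← Nat.sub_add_cancel (show 1 ≤ p ^ n by omega), Nat.choose_succ_succ]
    have vanish := cast_choose_prime_pow_eq_zero (R := R) hp n (r := k + 1) (by omega) (by omega)
    rw [pascal, Nat.cast_add, ih (by omega)] at vanish
    rw [pow_succ]
    linear_combination vanish

theorem sum_range_prime_pow_choose_mul_choose (hp : p.Prime) (n : ℕ) {k ℓ : ℕ}
    (hkℓ : k + ℓ < p ^ n) :
    ∑ j ∈ range (p ^ n), (j.choose k * j.choose ℓ : R) =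
      (p ^ n).choose (k + ℓ + 1) * (k + ℓ).choose k := by
  have hℕ := congrArg (Nat.cast : ℕ → R) (Nat.sum_range_choose_mul_choose (p ^ n) k ℓ)
  push_cast at hℕ
  rw [hℕ, sum_range_succ, Nat.sub_self, Nat.choose_zero_right, Nat.cast_one, mul_one,
    add_eq_right]
  exact sum_eq_zero fun i hi => by
    rw [mem_range] at hi
    rw [cast_choose_prime_pow_eq_zero hp n (by omega) (by omega), zero_mul]

end CharP

/-- For `a_{k,ℓ} = Σ_{j=0}^{p^n-1} C(j,k)·C(j,ℓ)` in `F_p`: it vanishes when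
`k + ℓ ≤ p^n - 2` and equals `(-1)^k` when `k + ℓ = p^n - 1`. -/
theorem sum_choose_mul_choose (p n k ℓ : ℕ) [Fact p.Prime] (hn : 1 ≤ n) :
    (k + ℓ ≤ p ^ n - 2 →
      ∑ j ∈ Finset.range (p ^ n), ((j.choose k : ZMod p) * (j.choose ℓ : ZMod p)) = 0) ∧
    (k + ℓ = p ^ n - 1 →
      ∑ j ∈ Finset.range (p ^ n), ((j.choose k : ZMod p) * (j.choose ℓ : ZMod p))
        = (-1) ^ k) := by
  have hp : p.Prime := Fact.out
  have hpn : p ≤ p ^ n := Nat.le_self_pow (by omega) p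
  have hp2 := hp.two_le
  constructor
  · intro hkℓ
    rw [sum_range_prime_pow_choose_mul_choose hp n (by omega),
      cast_choose_prime_pow_eq_zero hp n (by omega) (by omega), zero_mul]
  · intro hkℓ
    rw [sum_range_prime_pow_choose_mul_choose hp n (by omega), show k + ℓ + 1 = p ^ n by omega,
      Nat.choose_self, Nat.cast_one, one_mul, hkℓ]
    exact cast_choose_prime_pow_sub_one hp n (by omega)
end

section
/- In F_p[X,Y], the identity Σ_{j=0}^{p^n-1} (1+X)^j (1+Y)^j = (X + Y + XY)^{p^n - 1} holds. -/
/-!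
Since `(1 + X)(1 + Y) = 1 + s` with `s = X + Y + XY`, the sum is the geometric series of `1 + s`.
Multiplied by `s` it telescopes to `(1 + s)^(p^n) - 1`, which is `s^(p^n)` by the Frobenius;
cancelling `s` in the domain `F_p[X,Y]` gives the claim.
-/

open Finset

theorem geom_sum_one_add_mul_eq_pow_char_pow {R : Type*} [CommRing R] (p : ℕ) [ExpChar R p]
    (s : R) (n : ℕ) : (∑ i ∈ range (p ^ n), (1 + s) ^ i) * s = s ^ p ^ n := by
  have h := geom_sum_mul_add s (p ^ n)
  rw [add_pow_expChar_pow, one_pow, add_left_inj] at h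
  simpa only [add_comm (1 : R)] using h

theorem geom_sum_one_add_eq_pow_char_pow_sub_one {R : Type*} [CommRing R] [IsDomain R]
    (p : ℕ) [hp : Fact p.Prime] [CharP R p] (s : R) (n : ℕ) :
    ∑ i ∈ range (p ^ n), (1 + s) ^ i = s ^ (p ^ n - 1) := by
  rcases eq_or_ne s 0 with rfl | hs
  · -- the sum is then `p ^ n`, which vanishes in `R` unless `n = 0`
    rcases n.eq_zero_or_pos with rfl | hn
    · simp
    · have : 1 < p ^ n := Nat.one_lt_pow hn.ne' hp.out.one_lt
      simp [hn.ne', zero_pow (show p ^ n - 1 ≠ 0 by omega)]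
  · apply mul_right_cancel₀ hs
    rw [geom_sum_one_add_mul_eq_pow_char_pow, ← pow_succ,
      Nat.sub_add_cancel (pow_pos hp.out.pos n)]

open MvPolynomial

theorem sum_geom_eq_pow_general (p n : ℕ) [Fact p.Prime] :
    ∑ j ∈ Finset.range (p ^ n),
        (1 + (X 0 : MvPolynomial (Fin 2) (ZMod p))) ^ j * (1 + X 1) ^ j =
      ((X 0 : MvPolynomial (Fin 2) (ZMod p)) + X 1 + X 0 * X 1) ^ (p ^ n - 1) := by
  have h (j : ℕ) : (1 + (X 0 : MvPolynomial (Fin 2) (ZMod p))) ^ j * (1 + X 1) ^ j =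
      (1 + (X 0 + X 1 + X 0 * X 1)) ^ j := by
    rw [← mul_pow]; ring
  simp only [h]
  exact geom_sum_one_add_eq_pow_char_pow_sub_one p _ n

/-- In `F_p[X,Y]` one has `Σ_{j=0}^{p^n-1} (1+X)^j (1+Y)^j = (X + Y + XY)^{p^n-1}`. -/
theorem sum_geom_eq_pow (p n : ℕ) [Fact p.Prime] (hn : 1 ≤ n) :
    ∑ j ∈ Finset.range (p ^ n),
        (1 + (X 0 : MvPolynomial (Fin 2) (ZMod p))) ^ j * (1 + X 1) ^ j =
      ((X 0 : MvPolynomial (Fin 2) (ZMod p)) + X 1 + X 0 * X 1) ^ (p ^ n - 1) :=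
  sum_geom_eq_pow_general p n
end

section
/- For 0 ≤ k ≤ p^n, the orthogonal complement of V_{k,n} with respect to the bilinear pairing ⟨x,y⟩ = Σ_{j=0}^{p^n-1} x_j y_j equals V_{p^n - k, n}. -/
/-!
The vectors `v_ℓ`, `ℓ < p^n`, form a basis of `E^{p^n}` (their matrix is unitriangular), so
`V_{k,n}` has dimension `k` and its orthogonal complement has dimension `p^n - k`. It therefore
suffices that `⟨v_a, v_b⟩ = 0` whenever `a + b < p^n - 1`. Splitting off the lowest base-`p`
digit of `j`, `a`, `b`, Lucas' theorem factors `⟨v_a, v_b⟩` into the same sum one level down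
times the digit sum `∑_{r<p} C(r,a₀) C(r,b₀)`, and one of the two factors is in the vanishing
range. For the digit sum, `a₀! b₀! C(r,a₀) C(r,b₀)` is a polynomial in `r` of degree
`a₀ + b₀ < p - 1` over `𝔽_p`, and such polynomials sum to zero over `𝔽_p`.
-/

open Finset Polynomial

theorem FiniteField.sum_eval_eq_zero_of_natDegree_lt {K : Type*} [Field K] [Fintype K]
    {f : K[X]} (hf : f.natDegree < Fintype.card K - 1) : ∑ x, f.eval x = 0 := by
  simp_rw [eval_eq_sum_range, Finset.sum_comm (γ := K), ← Finset.mul_sum]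
  refine Finset.sum_eq_zero fun i hi => ?_
  rw [FiniteField.sum_pow_lt_card_sub_one (K := K) i (by simp at hi; omega), mul_zero]

theorem Fin.sum_mul_div_mod {M : Type*} [NonUnitalNonAssocSemiring M] {m n : ℕ}
    (g h : ℕ → M) :
    ∑ j : Fin (m * n), g (j / n) * h (j % n) = (∑ q : Fin m, g q) * ∑ r : Fin n, h r := by
  rw [Finset.sum_mul_sum, ← Fintype.sum_prod_type']
  exact Fintype.sum_equiv finProdFinEquiv.symm _ _ fun j => by simp [Fin.coe_divNat, Fin.coe_modNat]

theorem Nat.mod_add_mod_lt_or_div_add_div_lt {p N a b : ℕ} (h : a + b < N * p - 1) :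
    a % p + b % p < p - 1 ∨ a / p + b / p < N - 1 := by
  by_contra! hge
  have hdiv := Nat.mul_le_mul_right p hge.2
  rw [Nat.sub_one_mul, Nat.add_mul] at hdiv
  have := Nat.div_add_mod' a p
  have := Nat.div_add_mod' b p
  omega

namespace ZMod

theorem bijective_natCast_fin_val {p : ℕ} [NeZero p] :
    Function.Bijective fun r : Fin p => ((r : ℕ) : ZMod p) := by
  refine (Fintype.bijective_iff_injective_and_card _).2 ⟨fun r s hrs => Fin.ext ?_, by simp⟩
  simpa only [ZMod.val_natCast, Nat.mod_eq_of_lt r.2, Nat.mod_eq_of_lt s.2] using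
    congrArg ZMod.val hrs

variable {p : ℕ} [Fact p.Prime]

theorem natCast_choose_eq_choose_mod_mul_choose_div (j a : ℕ) :
    ((j.choose a : ℕ) : ZMod p) = (j % p).choose (a % p) * (j / p).choose (a / p) := by
  rw [(ZMod.natCast_eq_natCast_iff _ _ _).2 Choose.choose_modEq_choose_mod_mul_choose_div_nat,
    Nat.cast_mul]

theorem sum_fin_choose_mul_choose_eq_zero {a b : ℕ} (hab : a + b < p - 1) :
    ∑ r : Fin p, ((r : ℕ).choose a * (r : ℕ).choose b : ZMod p) = 0 := by
  have hfact : ((a.factorial * b.factorial : ℕ) : ZMod p) ≠ 0 := by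
    rw [Ne, ZMod.natCast_eq_zero_iff, (Fact.out : p.Prime).dvd_mul,
      Nat.Prime.dvd_factorial Fact.out, Nat.Prime.dvd_factorial Fact.out]
    omega
  refine (mul_eq_zero.1 ?_).resolve_left hfact
  set f : (ZMod p)[X] := descPochhammer (ZMod p) a * descPochhammer (ZMod p) b
  have hf : f.natDegree < Fintype.card (ZMod p) - 1 := by
    rw [ZMod.card]
    exact (natDegree_mul_le.trans (by simp)).trans_lt hab
  calc _ = ∑ r : Fin p, f.eval ((r : ℕ) : ZMod p) := by
        rw [Finset.mul_sum]
        refine Finset.sum_congr rfl fun r _ => ?_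
        simp only [f, eval_mul, descPochhammer_eval_eq_descFactorial,
          Nat.descFactorial_eq_factorial_mul_choose]
        push_cast
        ring
    _ = ∑ x : ZMod p, f.eval x :=
        Fintype.sum_bijective _ bijective_natCast_fin_val _ _ fun _ => rfl
    _ = 0 := FiniteField.sum_eval_eq_zero_of_natDegree_lt hf

theorem sum_fin_pow_choose_mul_choose_eq_zero (n : ℕ) {a b : ℕ} (hab : a + b < p ^ n - 1) :
    ∑ j : Fin (p ^ n), ((j : ℕ).choose a * (j : ℕ).choose b : ZMod p) = 0 := by
  induction n generalizing a b with
  | zero => simp at hab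
  | succ n ih =>
    have lucas (j : ℕ) : (j.choose a * j.choose b : ZMod p) =
        ((j / p).choose (a / p) * (j / p).choose (b / p) : ZMod p) *
          ((j % p).choose (a % p) * (j % p).choose (b % p)) := by
      rw [natCast_choose_eq_choose_mod_mul_choose_div j a,
        natCast_choose_eq_choose_mod_mul_choose_div j b]
      ring
    rw [pow_succ] at hab ⊢
    calc _ = ∑ j : Fin (p ^ n * p),
          ((((j : ℕ) / p).choose (a / p) * ((j : ℕ) / p).choose (b / p) : ZMod p) *
            (((j : ℕ) % p).choose (a % p) * ((j : ℕ) % p).choose (b % p))) :=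
          Finset.sum_congr rfl fun j _ => lucas j
      _ = (∑ q : Fin (p ^ n), ((q : ℕ).choose (a / p) * (q : ℕ).choose (b / p) : ZMod p)) *
          ∑ r : Fin p, ((r : ℕ).choose (a % p) * (r : ℕ).choose (b % p) : ZMod p) :=
          Fin.sum_mul_div_mod (fun q => (q.choose (a / p) * q.choose (b / p) : ZMod p))
            (fun r => (r.choose (a % p) * r.choose (b % p) : ZMod p))
      _ = 0 := by
        rcases Nat.mod_add_mod_lt_or_div_add_div_lt hab with hlow | hhigh
        · rw [sum_fin_choose_mul_choose_eq_zero hlow, mul_zero]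
        · rw [ih hhigh, zero_mul]

end ZMod

open Module
open LinearMap (BilinForm)

def binomVec (R : Type*) [NatCast R] (N ℓ : ℕ) : Fin N → R :=
  fun j => ((j : ℕ).choose ℓ : R)

def binomSpan (R : Type*) [Semiring R] (N k : ℕ) : Submodule R (Fin N → R) :=
  Submodule.span R {w | ∃ ℓ < k, w = binomVec R N ℓ}

theorem linearIndependent_binomVec (R : Type*) [CommRing R] (N : ℕ) :
    LinearIndependent R fun ℓ : Fin N => binomVec R N ℓ := by
  let A : Matrix (Fin N) (Fin N) R := Matrix.of fun j ℓ => ((j : ℕ).choose ℓ : R)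
  have hA : A.IsLowerTriangular := fun j ℓ hjℓ => by
    simp [A, Nat.choose_eq_zero_of_lt (show (j : ℕ) < ℓ from hjℓ)]
  have hdet : A.det = 1 := by simp [Matrix.det_of_isLowerTriangular A hA, A]
  exact Matrix.linearIndependent_cols_of_isUnit
    ((Matrix.isUnit_iff_isUnit_det A).2 (hdet ▸ isUnit_one))

theorem binomSpan_eq_span_range (R : Type*) [Semiring R] {N k : ℕ} :
    binomSpan R N k = Submodule.span R (Set.range fun ℓ : Fin k => binomVec R N ℓ) := by
  refine congrArg (Submodule.span R) (Set.ext fun w => ?_)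
  exact ⟨fun ⟨ℓ, hℓ, hw⟩ => ⟨⟨ℓ, hℓ⟩, hw.symm⟩,
    fun ⟨ℓ, hw⟩ => ⟨ℓ, ℓ.2, hw.symm⟩⟩

theorem finrank_binomSpan (K : Type*) [Field K] {N k : ℕ} (hk : k ≤ N) :
    finrank K (binomSpan K N k) = k := by
  rw [binomSpan_eq_span_range, finrank_span_eq_card, Fintype.card_fin]
  exact (linearIndependent_binomVec K N).comp (Fin.castLE hk) (Fin.castLE_injective hk)

theorem binomVec_dotProduct_binomVec {p : ℕ} [Fact p.Prime] (R : Type*) [Ring R] [CharP R p]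
    (n : ℕ) {a b : ℕ} (hab : a + b < p ^ n - 1) :
    binomVec R (p ^ n) a ⬝ᵥ binomVec R (p ^ n) b = 0 := by
  simpa [binomVec, dotProduct] using
    congrArg (ZMod.castHom dvd_rfl R) (ZMod.sum_fin_pow_choose_mul_choose_eq_zero n hab)

theorem LinearMap.BilinForm.span_le_orthogonal_span {R M : Type*} [CommSemiring R]
    [AddCommMonoid M] [Module R M] {B : BilinForm R M} {S T : Set M}
    (h : ∀ s ∈ S, ∀ t ∈ T, B t s = 0) :
    Submodule.span R S ≤ B.orthogonal (Submodule.span R T) :=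
  Submodule.span_le.2 fun s hs _ ht =>
    (Submodule.span_le (p := LinearMap.ker (B.flip s))).2 (fun t ht' => h s hs t ht') ht

theorem dotProductBilin_nondegenerate (R ι : Type*) [CommRing R] [Fintype ι] :
    (dotProductBilin R R : BilinForm R (ι → R)).Nondegenerate :=
  ⟨fun x hx => dotProduct_eq_zero x hx,
    fun y hy => dotProduct_eq_zero y fun x => by rw [dotProduct_comm]; exact hy x⟩

theorem orthogonal_binomSpan {p : ℕ} [Fact p.Prime] (K : Type*) [Field K] [CharP K p] (n : ℕ)
    {k : ℕ} (hk : k ≤ p ^ n) :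
    BilinForm.orthogonal (dotProductBilin K K) (binomSpan K (p ^ n) k) =
      binomSpan K (p ^ n) (p ^ n - k) := by
  have hle : binomSpan K (p ^ n) (p ^ n - k) ≤
      BilinForm.orthogonal (dotProductBilin K K) (binomSpan K (p ^ n) k) :=
    BilinForm.span_le_orthogonal_span <| by
      rintro _ ⟨b, hb, rfl⟩ _ ⟨a, ha, rfl⟩
      exact binomVec_dotProduct_binomVec K n (by omega)
  refine (Submodule.eq_of_le_of_finrank_eq hle ?_).symm
  rw [BilinForm.finrank_orthogonal (dotProductBilin_nondegenerate K _), finrank_binomSpan K hk,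
    finrank_binomSpan K (Nat.sub_le _ _), Module.finrank_fin_fun]

theorem binom_span_orthogonal_general (p n : ℕ) [Fact p.Prime]
    (E : Type*) [Field E] [CharP E p] (k : ℕ) (hk : k ≤ p ^ n) :
    {x : Fin (p ^ n) → E |
        ∀ y ∈ Submodule.span E
            {w : Fin (p ^ n) → E | ∃ ℓ < k, w = fun j : Fin (p ^ n) => (((j : ℕ).choose ℓ : E))},
          ∑ j, x j * y j = 0} =
      ↑(Submodule.span E
          {w : Fin (p ^ n) → E | ∃ ℓ < p ^ n - k, w = fun j : Fin (p ^ n) => (((j : ℕ).choose ℓ : E))}) := by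
  ext x
  change (∀ y ∈ binomSpan E (p ^ n) k, x ⬝ᵥ y = 0) ↔ x ∈ binomSpan E (p ^ n) (p ^ n - k)
  rw [← orthogonal_binomSpan E n hk, BilinForm.mem_orthogonal_iff]
  simp only [dotProductBilin_apply_apply, dotProduct_comm]

/-- For `0 ≤ k ≤ p^n`, the orthogonal complement of `V_{k,n}` (the span of the binomial
vectors `v_{ℓ,n} = (C(j,ℓ) mod p)_j`, `ℓ < k`) with respect to the pairing
`⟨x,y⟩ = Σ_j x_j y_j` is `V_{p^n-k,n}`. -/
theorem binom_span_orthogonal (p n : ℕ) [Fact p.Prime] (hn : 1 ≤ n)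
    (E : Type*) [Field E] [CharP E p] (k : ℕ) (hk : k ≤ p ^ n) :
    {x : Fin (p ^ n) → E |
        ∀ y ∈ Submodule.span E
            {w : Fin (p ^ n) → E | ∃ ℓ < k, w = fun j : Fin (p ^ n) => (((j : ℕ).choose ℓ : E))},
          ∑ j, x j * y j = 0} =
      ↑(Submodule.span E
          {w : Fin (p ^ n) → E | ∃ ℓ < p ^ n - k, w = fun j : Fin (p ^ n) => (((j : ℕ).choose ℓ : E))}) :=
  binom_span_orthogonal_general p n E k hk
end

section
/- Let Δ: V_n → V_n be defined by (Δx)_j = x_{j-1} - x_j (indices mod p^n). If 0 ≤ k + ℓ ≤ p^n, then Δ^k restricts to a surjection V_{ℓ+k,n} → V_{ℓ,n} with kernel V_{k,n}; moreover, for x ∈ V_n, Δ^k(x) ∈ V_{ℓ,n} if and only if x ∈ V_{ℓ+k,n}. -/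
/-- The binomial vector `v_{m,n}` in `V_n = E^{Z/p^nZ}`, `j ↦ C(j,m) mod p`. -/
def vSeq (p n : ℕ) (E : Type*) [Semiring E] (m : ℕ) : ZMod (p ^ n) → E :=
  fun j => ((ZMod.val j).choose m : E)

/-- The subspace `V_{k,n}`, spanned by the `v_{ℓ,n}` for `0 ≤ ℓ < k`. -/
def VSpan (p n : ℕ) (E : Type*) [Field E] (k : ℕ) : Submodule E (ZMod (p ^ n) → E) :=
  Submodule.span E {w | ∃ ℓ < k, w = vSeq p n E ℓ}

/-- The difference operator `Δ`, `(Δx)_j = x_{j-1} - x_j`, indices mod `p^n`. -/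
def delta (p n : ℕ) (E : Type*) [Ring E] (x : ZMod (p ^ n) → E) : ZMod (p ^ n) → E :=
  fun j => x (j - 1) - x j

/-!
Write `N = p ^ n` and `u_m(j) = (-1)^m C(j + m, m)`. Then `Δ u_0 = 0` and `Δ u_{m+1} = u_m` for
`m + 1 < N`: away from `j = 0` this is Pascal's rule, and the wrap-around at `j = 0` is harmless
because `a ↦ C(a, m) mod p` has period `N` for `m < N`, as `(X + 1)^N = X^N + 1` in characteristic
`p`. Vandermonde gives `u_m ≡ ±v_m` modulo `V_m`, so the `u_m` with `m < k` also span `V_k`.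

The theorem then holds for any chain `f u_0 = 0`, `f u_{m+1} = u_m` (`m + 1 < N`) with
`ker f = ⟨u_0⟩`: `f^k` maps `⟨u_m : m < ℓ + k⟩` onto `⟨u_m : m < ℓ⟩`, hence by induction
`ker f^k = ⟨u_m : m < k⟩`, and the preimage of `⟨u_m : m < ℓ⟩` is `⟨u_m : m < ℓ + k⟩ + ker f^k`.
-/

open Submodule Set Polynomial

structure IsJordanChain {R M : Type*} [Semiring R] [AddCommMonoid M] [Module R M]
    (f : M →ₗ[R] M) (u : ℕ → M) (N : ℕ) : Prop where
  apply_zero : f (u 0) = 0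
  apply_succ : ∀ m, m + 1 < N → f (u (m + 1)) = u m

namespace IsJordanChain

variable {R M : Type*} [Ring R] [AddCommGroup M] [Module R M] {f : M →ₗ[R] M} {u : ℕ → M}
  {N : ℕ}

theorem pow_apply_of_le (hu : IsJordanChain f u N) {k m : ℕ} (hkm : k ≤ m) (hm : m < N) :
    (f ^ k) (u m) = u (m - k) := by
  induction k with
  | zero => simp
  | succ k ih =>
    rw [pow_succ', Module.End.mul_apply, ih (by omega),
      show m - k = m - (k + 1) + 1 by omega, hu.apply_succ _ (by omega)]

theorem pow_apply_of_lt (hu : IsJordanChain f u N) {k m : ℕ} (hmk : m < k) (hm : m < N) :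
    (f ^ k) (u m) = 0 := by
  obtain ⟨i, rfl⟩ : ∃ i, k = i + 1 + m := ⟨k - 1 - m, by omega⟩
  rw [pow_add, Module.End.mul_apply, hu.pow_apply_of_le le_rfl hm, Nat.sub_self, pow_succ,
    Module.End.mul_apply, hu.apply_zero, map_zero]

theorem map_pow_span (hu : IsJordanChain f u N) {k ℓ : ℕ} (h : ℓ + k ≤ N) :
    (span R (u '' Iio (ℓ + k))).map (f ^ k) = span R (u '' Iio ℓ) := by
  rw [map_span, ← image_comp]
  apply le_antisymm <;> rw [span_le]
  · rintro _ ⟨m, hm, rfl⟩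
    by_cases hmk : m < k
    · simp [hu.pow_apply_of_lt hmk (by simp at hm; omega)]
    · rw [Function.comp_apply, hu.pow_apply_of_le (not_lt.mp hmk) (by simp at hm; omega)]
      exact subset_span ⟨m - k, by simp at hm ⊢; omega, rfl⟩
  · rintro _ ⟨m, hm, rfl⟩
    refine subset_span ⟨m + k, by simp at hm ⊢; omega, ?_⟩
    rw [Function.comp_apply, hu.pow_apply_of_le (by omega) (by simp at hm; omega),
      Nat.add_sub_cancel]

theorem ker_pow (hu : IsJordanChain f u N) (hker : LinearMap.ker f ≤ R ∙ u 0) {k : ℕ}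
    (hk : k ≤ N) : LinearMap.ker (f ^ k) = span R (u '' Iio k) := by
  refine le_antisymm ?_ (LinearMap.le_ker_iff_map.mpr
    (by simpa using hu.map_pow_span (ℓ := 0) (by simpa using hk)))
  induction k with
  | zero => simp [Module.End.one_eq_id]
  | succ k ih =>
    intro x hx
    have hfx : f x ∈ (span R (u '' Iio (k + 1))).map f := by
      rw [← pow_one f, hu.map_pow_span hk]
      exact ih (by omega) (by rwa [LinearMap.mem_ker, pow_succ, Module.End.mul_apply] at hx)
    obtain ⟨y, hy, hfy⟩ := hfx
    have hxy : x - y ∈ span R (u '' Iio (k + 1)) := by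
      have h0 : x - y ∈ R ∙ u 0 := hker (by simp [hfy])
      have hu0 : {u 0} ⊆ u '' Iio (k + 1) := singleton_subset_iff.mpr ⟨0, k.succ_pos, rfl⟩
      exact span_mono hu0 h0
    simpa using add_mem hxy hy

theorem comap_pow_span (hu : IsJordanChain f u N) (hker : LinearMap.ker f ≤ R ∙ u 0)
    {k ℓ : ℕ} (h : ℓ + k ≤ N) :
    (span R (u '' Iio ℓ)).comap (f ^ k) = span R (u '' Iio (ℓ + k)) := by
  rw [← hu.map_pow_span h, comap_map_eq, hu.ker_pow hker (by omega)]
  exact sup_eq_left.mpr (span_mono (image_mono (Iio_subset_Iio (by omega))))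

end IsJordanChain

theorem span_image_Iio_eq_of_sub_smul_mem {R M : Type*} [Ring R] [AddCommGroup M] [Module R M]
    {u v : ℕ → M} (c : ℕ → Rˣ) (h : ∀ m, u m - c m • v m ∈ span R (v '' Iio m)) (k : ℕ) :
    span R (u '' Iio k) = span R (v '' Iio k) := by
  induction k with
  | zero => simp
  | succ k ih =>
    have hmono (w : ℕ → M) : span R (w '' Iio k) ≤ span R (w '' Iio (k + 1)) :=
      span_mono (image_mono (Iio_subset_Iio k.le_succ))
    have hu : u k ∈ span R (u '' Iio (k + 1)) := subset_span ⟨k, lt_add_one k, rfl⟩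
    have hv : v k ∈ span R (v '' Iio (k + 1)) := subset_span ⟨k, lt_add_one k, rfl⟩
    apply le_antisymm <;> rw [span_le] <;> rintro _ ⟨m, hm, rfl⟩ <;>
      rcases Nat.lt_succ_iff_lt_or_eq.mp hm with hm | rfl
    · exact hmono v (ih ▸ subset_span ⟨m, hm, rfl⟩)
    · rw [← sub_add_cancel (u m) (c m • v m)]
      exact add_mem (hmono v (h m)) (smul_of_tower_mem _ _ hv)
    · exact hmono u (ih ▸ subset_span ⟨m, hm, rfl⟩)
    · rw [← inv_smul_smul (c m) (v m), ← sub_sub_cancel (u m) (c m • v m)]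
      exact smul_of_tower_mem _ _ (sub_mem hu (hmono u (ih ▸ h m)))

section PrimePowPeriodic

variable {R : Type*} [CommSemiring R] (p : ℕ) [Fact p.Prime] [CharP R p]

theorem Nat.cast_choose_add_prime_pow {n m : ℕ} (a : ℕ) (hm : m < p ^ n) :
    ((a + p ^ n).choose m : R) = a.choose m := by
  have key : ((X + 1 : R[X]) ^ (a + p ^ n)) = (X + 1) ^ a + (X + 1) ^ a * X ^ p ^ n := by
    rw [pow_add, add_pow_char_pow, one_pow, mul_add, mul_one, add_comm]
  simpa [coeff_X_add_one_pow, coeff_mul_X_pow', hm.not_ge] using congrArg (coeff · m) key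

theorem Nat.cast_choose_mod_prime_pow {n m : ℕ} (a : ℕ) (hm : m < p ^ n) :
    ((a % p ^ n).choose m : R) = a.choose m := by
  conv_rhs => rw [← Nat.mod_add_div a (p ^ n)]
  induction a / p ^ n with
  | zero => simp
  | succ q ih => rw [Nat.mul_succ, ← add_assoc, Nat.cast_choose_add_prime_pow p _ hm, ih]

theorem Nat.cast_choose_eq_of_modEq {n m a b : ℕ} (hab : a ≡ b [MOD p ^ n]) (hm : m < p ^ n) :
    (a.choose m : R) = b.choose m := by
  rw [← Nat.cast_choose_mod_prime_pow p a hm, ← Nat.cast_choose_mod_prime_pow p b hm, hab]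

end PrimePowPeriodic

section DifferenceOperator

variable (p n : ℕ) (E : Type*)

def deltaLinear [Ring E] : Module.End E (ZMod (p ^ n) → E) :=
  LinearMap.funLeft E E (· - 1) - LinearMap.id

theorem coe_deltaLinear [Ring E] : ⇑(deltaLinear p n E) = delta p n E :=
  rfl

/-- By upper negation, `u_m(j)` is the binomial coefficient `C(-1 - j, m)`. -/
def uSeq [Ring E] (m : ℕ) : ZMod (p ^ n) → E :=
  fun j => (-1) ^ m * ((j.val + m).choose m : E)

theorem isJordanChain_uSeq [Fact p.Prime] [CommRing E] [CharP E p] :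
    IsJordanChain (deltaLinear p n E) (uSeq p n E) (p ^ n) where
  apply_zero := by
    funext j
    simp [coe_deltaLinear, delta, uSeq]
  apply_succ m hm := by
    funext j
    have hj : (j - 1).val + 1 ≡ j.val [MOD p ^ n] := by
      rw [← ZMod.natCast_eq_natCast_iff]
      simp
    rw [coe_deltaLinear, delta, uSeq, uSeq, uSeq, ← add_assoc, add_right_comm,
      Nat.cast_choose_eq_of_modEq p (hj.add_right m) hm, ← add_assoc j.val,
      Nat.choose_succ_succ']
    push_cast
    ring

theorem ker_deltaLinear_le [NeZero (p ^ n)] [Ring E] :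
    LinearMap.ker (deltaLinear p n E) ≤ E ∙ uSeq p n E 0 := by
  intro x hx
  have hconst (m : ℕ) : x m = x 0 := by
    induction m with
    | zero => simp
    | succ m ih =>
      have := congrFun hx (m + 1 : ℕ)
      simp_all [coe_deltaLinear, delta, sub_eq_zero]
  rw [mem_span_singleton]
  refine ⟨x 0, funext fun j => ?_⟩
  rw [← ZMod.natCast_zmod_val j, hconst]
  simp [uSeq]

theorem uSeq_sub_smul_vSeq_mem [CommRing E] (m : ℕ) :
    uSeq p n E m - ((-1 : Eˣ) ^ m) • vSeq p n E m ∈ span E (vSeq p n E '' Iio m) := by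
  have hsum : uSeq p n E m - ((-1 : Eˣ) ^ m) • vSeq p n E m
      = ∑ i ∈ Finset.range m, ((-1) ^ m * (m.choose (m - i) : E)) • vSeq p n E i := by
    funext j
    simp [uSeq, vSeq, Nat.add_choose_eq, Finset.Nat.sum_antidiagonal_eq_sum_range_succ_mk,
      Finset.sum_range_succ, Units.smul_def]
    rw [mul_add, add_sub_cancel_right, Finset.mul_sum]
    exact Finset.sum_congr rfl fun _ _ => by ring
  rw [hsum]
  exact sum_mem fun i hi => smul_mem _ _ (subset_span ⟨i, Finset.mem_range.mp hi, rfl⟩)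

theorem span_uSeq_eq_VSpan [Field E] (k : ℕ) :
    span E (uSeq p n E '' Iio k) = VSpan p n E k := by
  rw [span_image_Iio_eq_of_sub_smul_mem _ (uSeq_sub_smul_vSeq_mem p n E), VSpan]
  congr
  ext
  simp [eq_comm]

end DifferenceOperator

theorem delta_pow_exact_general (p n : ℕ) [Fact p.Prime]
    (E : Type*) [Field E] [CharP E p] (k ℓ : ℕ) (h : k + ℓ ≤ p ^ n) :
    (∀ x : ZMod (p ^ n) → E,
        (delta p n E)^[k] x ∈ VSpan p n E ℓ ↔ x ∈ VSpan p n E (ℓ + k)) ∧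
    (∀ y ∈ VSpan p n E ℓ, ∃ x ∈ VSpan p n E (ℓ + k), (delta p n E)^[k] x = y) ∧
    (∀ x ∈ VSpan p n E (ℓ + k),
        ((delta p n E)^[k] x = 0 ↔ x ∈ VSpan p n E k)) := by
  have hu := isJordanChain_uSeq p n E
  have hker := ker_deltaLinear_le p n E
  simp only [← span_uSeq_eq_VSpan, ← coe_deltaLinear, ← Module.End.coe_pow]
  refine ⟨fun x => ?_, fun y hy => ?_, fun x _ => ?_⟩
  · rw [← mem_comap, hu.comap_pow_span hker (by omega)]
  · rwa [← hu.map_pow_span (k := k) (by omega)] at hy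
  · rw [← LinearMap.mem_ker, hu.ker_pow hker (by omega)]

/-- If `0 ≤ k + ℓ ≤ p^n`, then `Δ^k` restricts to a surjection from `V_{ℓ+k,n}` onto
`V_{ℓ,n}` with kernel `V_{k,n}`; moreover `Δ^k(x) ∈ V_{ℓ,n}` iff `x ∈ V_{ℓ+k,n}`. -/
theorem delta_pow_exact (p n : ℕ) [Fact p.Prime] (hn : 1 ≤ n)
    (E : Type*) [Field E] [CharP E p] (k ℓ : ℕ) (h : k + ℓ ≤ p ^ n) :
    (∀ x : ZMod (p ^ n) → E,
        (delta p n E)^[k] x ∈ VSpan p n E ℓ ↔ x ∈ VSpan p n E (ℓ + k)) ∧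
    (∀ y ∈ VSpan p n E ℓ, ∃ x ∈ VSpan p n E (ℓ + k), (delta p n E)^[k] x = y) ∧
    (∀ x ∈ VSpan p n E (ℓ + k),
        ((delta p n E)^[k] x = 0 ↔ x ∈ VSpan p n E k)) :=
  delta_pow_exact_general p n E k ℓ h
end

section
/- The operator Δ on V_n is nilpotent of index exactly p^n, and the only subspaces of V_n stable under Δ are the spaces ker(Δ^k) = V_{k,n} for 0 ≤ k ≤ p^n. -/
/-!
Write `Δ = S - 1` for the cyclic shift `S`. Since `S ^ p ^ n = 1` and `Δ` lives in a ring of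
characteristic `p`, `Δ ^ p ^ n = S ^ p ^ n - 1 = 0`. Pascal's rule gives
`Δ v_{m+1} = -(Δ v_m + v_m)`, hence `Δ ^ ℓ v_ℓ = (-1) ^ ℓ v_0`, and `Δ` maps `V_{k+1,n}` onto
`V_{k,n}`; as `ker Δ` is the constants, `ker Δ ^ k = V_{k,n}` follows by induction on `k`.

Stable subspaces are classified for any nilpotent `T` whose kernel is at most a line. If `W` is
`T`-stable, `k` is least with `T ^ k W = 0` and `x ∈ W` has `T ^ (k - 1) x ≠ 0`, then for
`y ∈ ker T ^ k` the vectors `T ^ (k - 1) y` and `T ^ (k - 1) x ≠ 0` both lie in `ker T`, so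
`y - c x ∈ ker T ^ (k - 1)` for a scalar `c`. By induction (applied to `T x`) that kernel lies in
`W`, hence `W = ker T ^ k`.
-/

open LinearMap (ker)

theorem Submodule.exists_smul_eq_of_mem_span_singleton {K V : Type*} [Field K] [AddCommGroup V]
    [Module K V] {v u w : V} (hu : u ∈ K ∙ v) (hw : w ∈ K ∙ v) (hw0 : w ≠ 0) :
    ∃ c : K, c • w = u := by
  obtain ⟨a, rfl⟩ := Submodule.mem_span_singleton.1 hu
  obtain ⟨b, rfl⟩ := Submodule.mem_span_singleton.1 hw
  have hb : b ≠ 0 := by rintro rfl; exact hw0 (zero_smul K v)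
  exact ⟨a / b, by rw [smul_smul, div_mul_cancel₀ a hb]⟩

namespace Module.End

variable {K V : Type*} [Field K] [AddCommGroup V] [Module K V] {T : Module.End K V} {v : V}
  {W : Submodule K V}

theorem ker_pow_zero (T : Module.End K V) : ker (T ^ 0) = ⊥ := by
  rw [pow_zero, one_eq_id, LinearMap.ker_id]

theorem ker_pow_succ_le_of_ker_pow_le (hT : ker T ≤ K ∙ v) {k : ℕ} {x : V}
    (hk : ker (T ^ k) ≤ W) (hx : x ∈ W) (hx0 : (T ^ k) x ≠ 0) (hx1 : (T ^ (k + 1)) x = 0) :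
    ker (T ^ (k + 1)) ≤ W := by
  intro y hy
  have pow_mem_span : ∀ z ∈ ker (T ^ (k + 1)), (T ^ k) z ∈ K ∙ v := fun z hz =>
    hT (by rwa [LinearMap.mem_ker, ← mul_apply, ← pow_succ'])
  obtain ⟨c, hc⟩ := Submodule.exists_smul_eq_of_mem_span_singleton
    (pow_mem_span y hy) (pow_mem_span x hx1) hx0
  have hyx : y - c • x ∈ ker (T ^ k) := by
    rw [LinearMap.mem_ker, map_sub, map_smul, hc, sub_self]
  simpa using W.add_mem (hk hyx) (W.smul_mem c hx)

theorem ker_pow_succ_le_of_mem_invtSubmodule (hT : ker T ≤ K ∙ v) (hW : W ∈ T.invtSubmodule)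
    {k : ℕ} {x : V} (hx : x ∈ W) (hx0 : (T ^ k) x ≠ 0) (hx1 : (T ^ (k + 1)) x = 0) :
    ker (T ^ (k + 1)) ≤ W := by
  induction k generalizing x with
  | zero =>
    exact ker_pow_succ_le_of_ker_pow_le hT (by rw [ker_pow_zero]; exact bot_le) hx hx0 hx1
  | succ k ih =>
    refine ker_pow_succ_le_of_ker_pow_le hT (ih (hW hx) ?_ ?_) hx hx0 hx1 <;>
      rwa [← mul_apply, ← pow_succ]

theorem ker_pow_mem_invtSubmodule (k : ℕ) : ker (T ^ k) ∈ T.invtSubmodule := by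
  intro x hx
  rw [Submodule.mem_comap, LinearMap.mem_ker, ← mul_apply, ← pow_succ, pow_succ', mul_apply,
    LinearMap.mem_ker.1 hx, map_zero]

theorem mem_invtSubmodule_iff_exists_eq_ker_pow (hT : ker T ≤ K ∙ v) {N : ℕ} (hN : T ^ N = 0) :
    W ∈ T.invtSubmodule ↔ ∃ k ≤ N, W = ker (T ^ k) := by
  classical
  refine ⟨fun hW => ?_, by rintro ⟨k, -, rfl⟩; exact ker_pow_mem_invtSubmodule k⟩
  have hWN : W ≤ ker (T ^ N) := by simp [hN]
  have hex : ∃ k, W ≤ ker (T ^ k) := ⟨N, hWN⟩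
  refine ⟨Nat.find hex, Nat.find_min' hex hWN, le_antisymm (Nat.find_spec hex) ?_⟩
  cases hk : Nat.find hex with
  | zero => rw [ker_pow_zero]; exact bot_le
  | succ k =>
    obtain ⟨x, hxW, hx0⟩ := SetLike.not_le_iff_exists.1 (Nat.find_min hex (m := k) (by omega))
    exact ker_pow_succ_le_of_mem_invtSubmodule hT hW hxW hx0 (hk ▸ Nat.find_spec hex hxW)

end Module.End

section Difference

variable (p n : ℕ) (E : Type*) [Field E]

def cyclicShift : Module.End E (ZMod (p ^ n) → E) := LinearMap.funLeft E E (· - 1)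

def deltaₗ : Module.End E (ZMod (p ^ n) → E) := cyclicShift p n E - 1

variable {p n E}

theorem deltaₗ_apply (x : ZMod (p ^ n) → E) (j : ZMod (p ^ n)) :
    deltaₗ p n E x j = x (j - 1) - x j := rfl

theorem coe_deltaₗ_pow (k : ℕ) : ⇑(deltaₗ p n E ^ k) = (delta p n E)^[k] :=
  Module.End.coe_pow _ k

theorem cyclicShift_pow_apply (m : ℕ) (x : ZMod (p ^ n) → E) (j : ZMod (p ^ n)) :
    (cyclicShift p n E ^ m) x j = x (j - m) := by
  induction m generalizing x with
  | zero => simp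
  | succ m ih =>
    rw [pow_succ, Module.End.mul_apply, ih, Nat.cast_succ, ← sub_sub]
    rfl

theorem cyclicShift_pow_card : cyclicShift p n E ^ p ^ n = 1 := by
  ext x j
  rw [cyclicShift_pow_apply, ZMod.natCast_self, sub_zero]
  rfl

theorem vSeq_zero : vSeq p n E 0 = 1 := by
  funext j
  simp [vSeq]

theorem deltaₗ_vSeq_zero : deltaₗ p n E (vSeq p n E 0) = 0 := by
  funext j
  simp [deltaₗ_apply, vSeq_zero]

theorem vSeq_mem_VSpan {ℓ k : ℕ} (h : ℓ < k) : vSeq p n E ℓ ∈ VSpan p n E k :=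
  Submodule.subset_span ⟨ℓ, h, rfl⟩

theorem ker_deltaₗ [NeZero (p ^ n)] : ker (deltaₗ p n E) ≤ E ∙ vSeq p n E 0 := by
  intro x hx
  have hstep (j : ZMod (p ^ n)) : x (j - 1) = x j := sub_eq_zero.1 (congrFun hx j)
  have hconst (m : ℕ) : x m = x 0 := by
    induction m with
    | zero => simp
    | succ m ih => rw [← ih, ← hstep, Nat.cast_succ, add_sub_cancel_right]
  refine Submodule.mem_span_singleton.2 ⟨x 0, funext fun j => ?_⟩
  rw [vSeq_zero, Pi.smul_apply, Pi.one_apply, smul_eq_mul, mul_one, ← ZMod.natCast_zmod_val j,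
    hconst]

end Difference

section PrimeCharacteristic

variable {p n : ℕ} {E : Type*} [Field E] [Fact p.Prime] [CharP E p]

theorem deltaₗ_pow_card : deltaₗ p n E ^ p ^ n = 0 := by
  have := charP_of_injective_algebraMap' E (A := Module.End E (ZMod (p ^ n) → E)) p
  rw [deltaₗ, sub_pow_char_pow_of_commute p n (Commute.one_right _), cyclicShift_pow_card,
    one_pow, sub_self]

/-- Pascal's rule survives the wrap-around at `j = -1` because `p ∣ C(p ^ n, m + 1)`. -/
theorem vSeq_succ_add_vSeq {m : ℕ} (hm : m + 1 < p ^ n) (j : ZMod (p ^ n)) :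
    vSeq p n E (m + 1) j + vSeq p n E m j = vSeq p n E (m + 1) (j + 1) := by
  have hj : j + 1 = ((j.val + 1 : ℕ) : ZMod (p ^ n)) := by push_cast [ZMod.natCast_zmod_val]; rfl
  rw [vSeq, vSeq, vSeq, hj, ZMod.val_natCast, ← Nat.cast_add, add_comm,
    ← Nat.choose_succ_succ']
  obtain hlt | heq : j.val + 1 < p ^ n ∨ j.val + 1 = p ^ n := by grind [ZMod.val_lt]
  · rw [Nat.mod_eq_of_lt hlt]
  · rw [heq, Nat.mod_self, Nat.choose_zero_succ, Nat.cast_zero, CharP.cast_eq_zero_iff E p]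
    exact (Fact.out : p.Prime).dvd_choose_pow m.succ_ne_zero hm.ne

theorem deltaₗ_vSeq_succ {m : ℕ} (hm : m + 1 < p ^ n) :
    deltaₗ p n E (vSeq p n E (m + 1)) = -(deltaₗ p n E (vSeq p n E m) + vSeq p n E m) := by
  funext j
  have h := vSeq_succ_add_vSeq (E := E) hm (j - 1)
  rw [sub_add_cancel] at h
  simp only [deltaₗ_apply, Pi.neg_apply, Pi.add_apply]
  linear_combination h

theorem deltaₗ_pow_vSeq_self {ℓ : ℕ} (hℓ : ℓ < p ^ n) :
    (deltaₗ p n E ^ ℓ) (vSeq p n E ℓ) = (-1 : E) ^ ℓ • vSeq p n E 0 := by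
  induction ℓ with
  | zero => simp
  | succ ℓ ih =>
    have hΔ : (deltaₗ p n E ^ ℓ) (deltaₗ p n E (vSeq p n E ℓ)) = 0 := by
      rw [← Module.End.mul_apply, ← pow_succ, pow_succ', Module.End.mul_apply, ih (by omega),
        map_smul, deltaₗ_vSeq_zero, smul_zero]
    rw [pow_succ, Module.End.mul_apply, deltaₗ_vSeq_succ hℓ, map_neg, map_add, hΔ,
      ih (by omega), zero_add, pow_succ, mul_neg_one, neg_smul]

theorem deltaₗ_pow_succ_vSeq {ℓ : ℕ} (hℓ : ℓ < p ^ n) :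
    (deltaₗ p n E ^ (ℓ + 1)) (vSeq p n E ℓ) = 0 := by
  rw [pow_succ', Module.End.mul_apply, deltaₗ_pow_vSeq_self hℓ, map_smul, deltaₗ_vSeq_zero,
    smul_zero]

theorem VSpan_le_ker_deltaₗ_pow {k : ℕ} (hk : k ≤ p ^ n) :
    VSpan p n E k ≤ ker (deltaₗ p n E ^ k) := by
  refine Submodule.span_le.2 ?_
  rintro _ ⟨ℓ, hℓ, rfl⟩
  rw [SetLike.mem_coe, LinearMap.mem_ker, ← pow_sub_mul_pow _ (Nat.succ_le_of_lt hℓ),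
    Module.End.mul_apply, deltaₗ_pow_succ_vSeq (by omega), map_zero]

theorem VSpan_le_map_deltaₗ {k : ℕ} (hk : k < p ^ n) :
    VSpan p n E k ≤ (VSpan p n E (k + 1)).map (deltaₗ p n E) := by
  refine Submodule.span_le.2 ?_
  rintro _ ⟨ℓ, hℓ, rfl⟩
  refine ⟨-(vSeq p n E (ℓ + 1) + vSeq p n E ℓ), ?_, ?_⟩
  · exact neg_mem (add_mem (vSeq_mem_VSpan (by omega)) (vSeq_mem_VSpan (by omega)))
  · rw [map_neg, map_add, deltaₗ_vSeq_succ (by omega)]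
    abel

theorem ker_deltaₗ_pow_le_VSpan {k : ℕ} (hk : k ≤ p ^ n) :
    ker (deltaₗ p n E ^ k) ≤ VSpan p n E k := by
  induction k with
  | zero => rw [Module.End.ker_pow_zero]; exact bot_le
  | succ k ih =>
    intro x hx
    have hΔx : deltaₗ p n E x ∈ VSpan p n E k :=
      ih (by omega) (by rwa [LinearMap.mem_ker, ← Module.End.mul_apply, ← pow_succ])
    obtain ⟨y, hy, hyx⟩ := VSpan_le_map_deltaₗ (by omega) hΔx
    have hxy : x - y ∈ E ∙ vSeq p n E 0 :=
      ker_deltaₗ (by rw [LinearMap.mem_ker, map_sub, hyx, sub_self])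
    have hconst : E ∙ vSeq p n E 0 ≤ VSpan p n E (k + 1) :=
      (Submodule.span_singleton_le_iff_mem _ _).2 (vSeq_mem_VSpan k.succ_pos)
    simpa using add_mem hy (hconst hxy)

theorem ker_deltaₗ_pow {k : ℕ} (hk : k ≤ p ^ n) : ker (deltaₗ p n E ^ k) = VSpan p n E k :=
  le_antisymm (ker_deltaₗ_pow_le_VSpan hk) (VSpan_le_ker_deltaₗ_pow hk)

end PrimeCharacteristic

theorem delta_nilpotent_stable_subspaces_general (p n : ℕ) [Fact p.Prime]
    (E : Type*) [Field E] [CharP E p] :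
    (∀ x : ZMod (p ^ n) → E, (delta p n E)^[p ^ n] x = 0) ∧
    (∃ x : ZMod (p ^ n) → E, (delta p n E)^[p ^ n - 1] x ≠ 0) ∧
    (∀ k ≤ p ^ n, ∀ x : ZMod (p ^ n) → E,
        ((delta p n E)^[k] x = 0 ↔ x ∈ VSpan p n E k)) ∧
    (∀ W : Submodule E (ZMod (p ^ n) → E),
        (∀ x ∈ W, delta p n E x ∈ W) ↔ ∃ k ≤ p ^ n, W = VSpan p n E k) := by
  refine ⟨fun x => ?_, ⟨vSeq p n E (p ^ n - 1), ?_⟩, fun k hk x => ?_, fun W => ?_⟩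
  · rw [← coe_deltaₗ_pow, deltaₗ_pow_card, LinearMap.zero_apply]
  · rw [← coe_deltaₗ_pow, deltaₗ_pow_vSeq_self (Nat.sub_one_lt (NeZero.ne _)), vSeq_zero]
    exact smul_ne_zero (pow_ne_zero _ (neg_ne_zero.2 one_ne_zero)) one_ne_zero
  · rw [← coe_deltaₗ_pow, ← LinearMap.mem_ker, ker_deltaₗ_pow hk]
  · refine (Module.End.mem_invtSubmodule_iff_exists_eq_ker_pow (W := W) ker_deltaₗ
      deltaₗ_pow_card).trans ?_
    exact exists_congr fun k => and_congr_right fun hk => by rw [ker_deltaₗ_pow hk]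

/-- `Δ` is nilpotent of index exactly `p^n`; its iterated kernels are
`ker(Δ^k) = V_{k,n}`, and the subspaces of `V_n` stable under `Δ` are exactly
the `V_{k,n}` for `0 ≤ k ≤ p^n`. -/
theorem delta_nilpotent_stable_subspaces (p n : ℕ) [Fact p.Prime] (hn : 1 ≤ n)
    (E : Type*) [Field E] [CharP E p] :
    (∀ x : ZMod (p ^ n) → E, (delta p n E)^[p ^ n] x = 0) ∧
    (∃ x : ZMod (p ^ n) → E, (delta p n E)^[p ^ n - 1] x ≠ 0) ∧
    (∀ k ≤ p ^ n, ∀ x : ZMod (p ^ n) → E,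
        ((delta p n E)^[k] x = 0 ↔ x ∈ VSpan p n E k)) ∧
    (∀ W : Submodule E (ZMod (p ^ n) → E),
        (∀ x ∈ W, delta p n E x ∈ W) ↔ ∃ k ≤ p ^ n, W = VSpan p n E k) :=
  delta_nilpotent_stable_subspaces_general p n E
end

section
/- If x ∈ V_{k,n} and 0 ≤ i ≤ p-1, then the sequence y ∈ V_{n-1} defined by y_j = x_{pj+i} belongs to V_{⌊(k-1)/p⌋+1, n-1}. -/
/-!
By Lucas' theorem, `C(p j + i, ℓ) ≡ C(i, ℓ mod p) · C(j, ⌊ℓ / p⌋) (mod p)` for `i < p`, so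
extracting the entries `p j + i` sends each generator `v_{ℓ,n}` of `V_{k,n}` to a multiple of
`v_{⌊ℓ/p⌋,n-1}`, and `⌊ℓ/p⌋ ≤ ⌊(k-1)/p⌋` for `ℓ < k`.
-/

theorem Nat.cast_choose_mul_add_of_lt (R : Type*) [Semiring R] {p : ℕ} [Fact p.Prime]
    [CharP R p] {i : ℕ} (hi : i < p) (a ℓ : ℕ) :
    ((p * a + i).choose ℓ : R) = i.choose (ℓ % p) * a.choose (ℓ / p) := by
  have lucas := Choose.choose_modEq_choose_mod_mul_choose_div_nat (p := p) (n := p * a + i) (k := ℓ)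
  rw [Nat.mul_add_mod, Nat.mod_eq_of_lt hi, Nat.mul_add_div (Fact.out : p.Prime).pos,
    Nat.div_eq_of_lt hi, Nat.add_zero] at lucas
  exact_mod_cast CharP.natCast_eq_natCast' R p lucas

def blockIndex (p m i : ℕ) (j : ZMod (p ^ m)) : ZMod (p ^ (m + 1)) :=
  (p : ZMod (p ^ (m + 1))) * (j.val : ZMod (p ^ (m + 1))) + (i : ZMod (p ^ (m + 1)))

theorem val_blockIndex {p m i : ℕ} [NeZero p] (hi : i < p) (j : ZMod (p ^ m)) :
    (blockIndex p m i j).val = p * j.val + i := by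
  have hlt : p * j.val + i < p ^ (m + 1) :=
    calc p * j.val + i < p * (j.val + 1) := by rw [Nat.mul_add_one]; omega
      _ ≤ p * p ^ m := Nat.mul_le_mul_left p j.val_lt
      _ = p ^ (m + 1) := (pow_succ' p m).symm
  rw [blockIndex, ← ZMod.val_natCast_of_lt hlt]
  push_cast
  rfl

theorem funLeft_blockIndex_vSeq {p : ℕ} [Fact p.Prime] (m : ℕ) (E : Type*) [Field E] [CharP E p]
    {i : ℕ} (hi : i < p) (ℓ : ℕ) :
    LinearMap.funLeft E E (blockIndex p m i) (vSeq p (m + 1) E ℓ)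
      = (i.choose (ℓ % p) : E) • vSeq p m E (ℓ / p) := by
  funext j
  simp only [LinearMap.funLeft_apply, vSeq, Pi.smul_apply, smul_eq_mul, val_blockIndex hi]
  exact Nat.cast_choose_mul_add_of_lt E hi _ ℓ

theorem VSpan_le_comap_funLeft_blockIndex {p : ℕ} [Fact p.Prime] (m : ℕ) (E : Type*) [Field E]
    [CharP E p] {i : ℕ} (hi : i < p) (k : ℕ) :
    VSpan p (m + 1) E k
      ≤ (VSpan p m E ((k - 1) / p + 1)).comap (LinearMap.funLeft E E (blockIndex p m i)) := by
  refine Submodule.span_le.mpr ?_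
  rintro _ ⟨ℓ, hℓ, rfl⟩
  rw [SetLike.mem_coe, Submodule.mem_comap, funLeft_blockIndex_vSeq m E hi]
  refine Submodule.smul_mem _ _ (Submodule.subset_span ⟨ℓ / p, ?_, rfl⟩)
  exact Nat.lt_succ_of_le (Nat.div_le_div_right (by omega))

theorem extract_block_general (p n : ℕ) [Fact p.Prime] (hn : 2 ≤ n)
    (E : Type*) [Field E] [CharP E p] (k i : ℕ)
    (hi : i ≤ p - 1) (x : ZMod (p ^ n) → E) (hx : x ∈ VSpan p n E k) :
    (fun j : ZMod (p ^ (n - 1)) =>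
        x ((p : ZMod (p ^ n)) * (ZMod.val j : ZMod (p ^ n)) + (i : ZMod (p ^ n))))
      ∈ VSpan p (n - 1) E ((k - 1) / p + 1) := by
  obtain ⟨m, rfl⟩ : ∃ m, n = m + 1 := ⟨n - 1, by omega⟩
  have hip : i < p := by have := (Fact.out : p.Prime).pos; omega
  exact VSpan_le_comap_funLeft_blockIndex m E hip k hx

/-- If `x ∈ V_{k,n}` and `0 ≤ i ≤ p-1`, then the sequence `y ∈ V_{n-1}` given by
`y_j = x_{pj+i}` belongs to `V_{⌊(k-1)/p⌋+1, n-1}`. -/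
theorem extract_block (p n : ℕ) [Fact p.Prime] (hn : 2 ≤ n)
    (E : Type*) [Field E] [CharP E p] (k i : ℕ) (hk1 : 1 ≤ k) (hk : k ≤ p ^ n)
    (hi : i ≤ p - 1) (x : ZMod (p ^ n) → E) (hx : x ∈ VSpan p n E k) :
    (fun j : ZMod (p ^ (n - 1)) =>
        x ((p : ZMod (p ^ n)) * (ZMod.val j : ZMod (p ^ n)) + (i : ZMod (p ^ n))))
      ∈ VSpan p (n - 1) E ((k - 1) / p + 1) :=
  extract_block_general p n hn E k i hi x hx
end

section
/- Every element of the Borel subgroup B of GL_2(Q_p) can be written uniquely as g_{β,δ}·k with β ∈ A, δ ∈ Z, and k ∈ KZ, where g_{β,δ} = [[1, β],[0, p^δ]]; i.e., B is the disjoint union over β ∈ A and δ ∈ Z of the cosets g_{β,δ}·KZ. -/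
/-- The set `A = {α_n p^{-n} + ⋯ + α_1 p^{-1} : 0 ≤ α_j ≤ p-1}`, a system of
representatives of `Q_p/Z_p`. -/
def repSet (p : ℕ) [Fact p.Prime] : Set ℚ_[p] :=
  {β | ∃ (n : ℕ) (α : ℕ → ℕ), (∀ j, α j < p) ∧
    β = ∑ j ∈ Finset.range n, (α j : ℚ_[p]) * (p : ℚ_[p]) ^ (-(j + 1 : ℤ))}

/-- The set of matrices in `KZ`: products of an element of
`K = B ∩ GL_2(Z_p)` (upper triangular, unit diagonal entries, integral upper
entry) and a scalar matrix `z·Id` with `z ∈ Q_p^×`. -/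
def KZMat (p : ℕ) [Fact p.Prime] : Set (Matrix (Fin 2) (Fin 2) ℚ_[p]) :=
  {m | ∃ (z : ℚ_[p]ˣ) (a d : ℤ_[p]ˣ) (b : ℤ_[p]),
    m = !![(z : ℚ_[p]) * ((a : ℤ_[p]) : ℚ_[p]), (z : ℚ_[p]) * ((b : ℤ_[p]) : ℚ_[p]);
           0, (z : ℚ_[p]) * ((d : ℤ_[p]) : ℚ_[p])]}

/-!
Write `g_{β,δ} = [[1, β], [0, p^δ]]`. The only candidate for `k` is `g_{β,δ}⁻¹ M =
[[M₀₀, M₀₁ - β p^{-δ} M₁₁], [0, p^{-δ} M₁₁]]`, and an upper triangular matrix lies in `KZ` exactly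
when its diagonal entries have the same norm and its upper entry is no larger. Here this says
`‖p^δ‖ = ‖M₁₁ / M₀₀‖`, which determines `δ`, and `M₀₁ p^δ / M₁₁ - β ∈ ℤ_p`, which determines `β`
because `A` is the set of fractions `c / pⁿ` with `c < pⁿ`, a system of representatives of
`ℚ_p / ℤ_p`: if `c / pⁿ - c' / pᵐ ∈ ℤ_p`, then `c pᵐ - c' pⁿ` is divisible by `p^{n+m}` and smaller
than it in absolute value.
-/

lemma Matrix.eq_upperTriangular_mul_iff {K : Type*} [Field K] {M k : Matrix (Fin 2) (Fin 2) K}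
    (hlow : M 1 0 = 0) {β q : K} (hq : q ≠ 0) :
    M = !![1, β; 0, q] * k ↔ k = !![M 0 0, M 0 1 - β / q * M 1 1; 0, M 1 1 / q] := by
  constructor
  · rintro rfl
    have h10 : k 1 0 = 0 := by simpa [Matrix.mul_apply, hq] using hlow
    ext i j
    fin_cases i <;> fin_cases j <;> simp [Matrix.mul_apply, h10]
    all_goals field_simp
    all_goals ring
  · rintro rfl
    ext i j
    fin_cases i <;> fin_cases j <;> simp [Matrix.mul_apply, hlow]
    all_goals field_simp
    all_goals ring

namespace Padic

variable {p : ℕ} [Fact p.Prime]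

lemma natCast_prime_ne_zero : (p : ℚ_[p]) ≠ 0 :=
  Nat.cast_ne_zero.mpr (Fact.out : p.Prime).ne_zero

lemma sum_digits_succ (n : ℕ) (α : ℕ → ℕ) :
    ∑ j ∈ Finset.range (n + 1), (α j : ℚ_[p]) * (p : ℚ_[p]) ^ (-(j + 1 : ℤ)) =
      (α 0 + ∑ j ∈ Finset.range n, (α (j + 1) : ℚ_[p]) * (p : ℚ_[p]) ^ (-(j + 1 : ℤ))) / p := by
  rw [Finset.sum_range_succ', add_comm, add_div, Finset.sum_div]
  congr 1
  · simp [div_eq_mul_inv]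
  · refine Finset.sum_congr rfl fun j _ => ?_
    rw [mul_div_assoc, div_eq_mul_inv, ← zpow_sub_one₀ natCast_prime_ne_zero]
    push_cast; ring_nf

lemma zero_mem_repSet : (0 : ℚ_[p]) ∈ repSet p :=
  ⟨0, fun _ => 0, fun _ => (Fact.out : p.Prime).pos, by simp⟩

lemma natCast_add_div_mem_repSet {r : ℕ} (hr : r < p) {β : ℚ_[p]} (hβ : β ∈ repSet p) :
    (r + β) / p ∈ repSet p := by
  obtain ⟨n, α, hα, rfl⟩ := hβ
  refine ⟨n + 1, Nat.rec r fun j _ => α j, fun j => ?_, by rw [sum_digits_succ]; rfl⟩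
  cases j <;> simp [hr, hα]

lemma natCast_div_pow_mem_repSet {n c : ℕ} (hc : c < p ^ n) :
    (c : ℚ_[p]) / p ^ n ∈ repSet p := by
  induction n generalizing c with
  | zero => simpa [Nat.lt_one_iff.mp (by simpa using hc)] using zero_mem_repSet
  | succ n ih =>
    have hr : c / p ^ n < p := Nat.div_lt_of_lt_mul (by rwa [← pow_succ])
    have hmod : c % p ^ n < p ^ n := Nat.mod_lt c (pow_pos (Fact.out : p.Prime).pos n)
    convert natCast_add_div_mem_repSet hr (ih hmod) using 1
    have hp := natCast_prime_ne_zero (p := p)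
    conv_lhs => rw [← Nat.div_add_mod c (p ^ n)]
    field_simp
    push_cast; ring

lemma exists_natCast_div_pow_of_mem_repSet {β : ℚ_[p]} (hβ : β ∈ repSet p) :
    ∃ n c : ℕ, c < p ^ n ∧ β = c / p ^ n := by
  obtain ⟨n, α, hα, rfl⟩ := hβ
  induction n generalizing α with
  | zero => exact ⟨0, 0, by simp, by simp⟩
  | succ n ih =>
    obtain ⟨m, c, hc, hsum⟩ := ih (fun j => α (j + 1)) fun j => hα _
    refine ⟨m + 1, α 0 * p ^ m + c, ?_, ?_⟩
    · calc α 0 * p ^ m + c < α 0 * p ^ m + p ^ m := by omega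
        _ = (α 0 + 1) * p ^ m := by ring
        _ ≤ p * p ^ m := Nat.mul_le_mul_right _ (hα 0)
        _ = p ^ (m + 1) := by ring
    · have hp := natCast_prime_ne_zero (p := p)
      rw [sum_digits_succ, hsum]
      field_simp
      push_cast; ring

lemma natCast_div_pow_eq_of_norm_sub_le_one {n m c c' : ℕ} (hc : c < p ^ n) (hc' : c' < p ^ m)
    (h : ‖(c : ℚ_[p]) / p ^ n - c' / p ^ m‖ ≤ 1) : (c : ℚ_[p]) / p ^ n = c' / p ^ m := by
  have hp := natCast_prime_ne_zero (p := p)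
  set k : ℤ := c * p ^ m - c' * p ^ n
  have hk : (k : ℚ_[p]) = ((c : ℚ_[p]) / p ^ n - c' / p ^ m) * p ^ (n + m) := by
    field_simp; push_cast [k]; ring
  have hdvd : (p ^ (n + m) : ℤ) ∣ k := by
    rw [← norm_int_le_pow_iff_dvd, hk, norm_mul, norm_p_pow]
    exact mul_le_of_le_one_left (by positivity) h
  have hlt : |k| < p ^ (n + m) := by
    have hp0 : (0 : ℤ) < p := by exact_mod_cast (Fact.out : p.Prime).pos
    have h1 : (c : ℤ) * p ^ m < p ^ (n + m) := by
      rw [pow_add]; exact mul_lt_mul_of_pos_right (by exact_mod_cast hc) (pow_pos hp0 m)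
    have h2 : (c' : ℤ) * p ^ n < p ^ (n + m) := by
      rw [pow_add, mul_comm (_ ^ n)]
      exact mul_lt_mul_of_pos_right (by exact_mod_cast hc') (pow_pos hp0 n)
    rw [abs_sub_lt_iff]
    constructor <;>
      linarith [show (0 : ℤ) ≤ c * p ^ m by positivity, show (0 : ℤ) ≤ c' * p ^ n by positivity]
  have hk0 := Int.eq_zero_of_abs_lt_dvd hdvd hlt
  rw [hk0, Int.cast_zero, zero_eq_mul] at hk
  exact sub_eq_zero.mp (hk.resolve_right (pow_ne_zero _ hp))

lemma eq_of_mem_repSet_of_norm_sub_le_one {β β' : ℚ_[p]} (hβ : β ∈ repSet p)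
    (hβ' : β' ∈ repSet p) (h : ‖β - β'‖ ≤ 1) : β = β' := by
  obtain ⟨n, c, hc, rfl⟩ := exists_natCast_div_pow_of_mem_repSet hβ
  obtain ⟨m, c', hc', rfl⟩ := exists_natCast_div_pow_of_mem_repSet hβ'
  exact natCast_div_pow_eq_of_norm_sub_le_one hc hc' h

lemma exists_norm_pow_mul_le_one (x : ℚ_[p]) : ∃ n : ℕ, ‖(p : ℚ_[p]) ^ n * x‖ ≤ 1 := by
  rcases eq_or_ne x 0 with rfl | hx
  · exact ⟨0, by simp⟩
  obtain ⟨n, hn⟩ := PadicInt.exists_pow_neg_lt p (inv_pos.mpr (norm_pos_iff.mpr hx))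
  refine ⟨n, ?_⟩
  calc ‖(p : ℚ_[p]) ^ n * x‖ = (p : ℝ) ^ (-(n : ℤ)) * ‖x‖ := by rw [norm_mul, norm_p_pow]
    _ ≤ ‖x‖⁻¹ * ‖x‖ := by gcongr
    _ = 1 := inv_mul_cancel₀ (norm_ne_zero_iff.mpr hx)

lemma exists_mem_repSet_norm_sub_le_one (x : ℚ_[p]) : ∃ β ∈ repSet p, ‖x - β‖ ≤ 1 := by
  obtain ⟨n, hn⟩ := exists_norm_pow_mul_le_one x
  set w : ℤ_[p] := ⟨p ^ n * x, hn⟩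
  obtain ⟨y, hy⟩ := Ideal.mem_span_singleton'.mp (PadicInt.appr_spec n w)
  refine ⟨_, natCast_div_pow_mem_repSet (PadicInt.appr_lt w n), ?_⟩
  have hxy : x - (w.appr n : ℚ_[p]) / p ^ n = y := by
    have := congrArg ((↑) : ℤ_[p] → ℚ_[p]) hy
    rw [PadicInt.coe_mul, PadicInt.coe_sub, PadicInt.coe_pow, PadicInt.coe_natCast,
      PadicInt.coe_natCast] at this
    change _ = p ^ n * x - _ at this
    field_simp [natCast_prime_ne_zero (p := p)]
    linear_combination -this
  rw [hxy]
  exact y.norm_le_one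

lemma existsUnique_mem_repSet_norm_sub_le_one (x : ℚ_[p]) :
    ∃! β, β ∈ repSet p ∧ ‖x - β‖ ≤ 1 := by
  obtain ⟨β, hβ, hxβ⟩ := exists_mem_repSet_norm_sub_le_one x
  refine ⟨β, ⟨hβ, hxβ⟩, fun β' ⟨hβ', hxβ'⟩ => eq_of_mem_repSet_of_norm_sub_le_one hβ' hβ ?_⟩
  calc ‖β' - β‖ = dist β' β := (dist_eq_norm _ _).symm
    _ ≤ max (dist β' x) (dist x β) := IsUltrametricDist.dist_triangle_max _ _ _
    _ ≤ 1 := by rw [dist_comm, dist_eq_norm, dist_eq_norm]; exact max_le hxβ' hxβ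

lemma existsUnique_norm_zpow_eq {x : ℚ_[p]} (hx : x ≠ 0) :
    ∃! δ : ℤ, ‖(p : ℚ_[p]) ^ δ‖ = ‖x‖ := by
  have hp : (1 : ℝ) < p := by exact_mod_cast (Fact.out : p.Prime).one_lt
  refine ⟨x.valuation, by simp only [norm_p_zpow, norm_eq_zpow_neg_valuation hx], fun δ hδ => ?_⟩
  simp only [norm_p_zpow, norm_eq_zpow_neg_valuation hx] at hδ
  exact neg_injective (zpow_right_injective₀ (by positivity) hp.ne' hδ)

lemma mem_KZMat_iff {k : Matrix (Fin 2) (Fin 2) ℚ_[p]} :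
    k ∈ KZMat p ↔ k 1 0 = 0 ∧ k 0 0 ≠ 0 ∧ ‖k 1 1‖ = ‖k 0 0‖ ∧ ‖k 0 1‖ ≤ ‖k 0 0‖ := by
  constructor
  · rintro ⟨z, a, d, b, rfl⟩
    simp only [Matrix.of_apply, Matrix.cons_val', Matrix.cons_val_zero, Matrix.cons_val_one,
      Matrix.empty_val', Matrix.cons_val_fin_one, norm_mul,
      PadicInt.padic_norm_e_of_padicInt, PadicInt.norm_units, mul_one]
    exact ⟨trivial, mul_ne_zero z.ne_zero (by simp), trivial,
      mul_le_of_le_one_right (norm_nonneg _) b.norm_le_one⟩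
  · rintro ⟨h10, h00, h11, h01⟩
    have hk : 0 < ‖k 0 0‖ := norm_pos_iff.mpr h00
    have hd : ‖k 1 1 / k 0 0‖ = 1 := by rw [norm_div, h11, div_self hk.ne']
    have hb : ‖k 0 1 / k 0 0‖ ≤ 1 := by rw [norm_div]; exact div_le_one_of_le₀ h01 hk.le
    refine ⟨Units.mk0 _ h00, 1, PadicInt.mkUnits hd, ⟨_, hb⟩, ?_⟩
    ext i j
    fin_cases i <;> fin_cases j <;> simp [mul_div_cancel₀ _ h00, h10]

lemma mem_KZMat_and_eq_mul_iff {M k : Matrix (Fin 2) (Fin 2) ℚ_[p]} (hlow : M 1 0 = 0)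
    (ha : M 0 0 ≠ 0) (hd : M 1 1 ≠ 0) {β q : ℚ_[p]} (hq : q ≠ 0) :
    k ∈ KZMat p ∧ M = !![1, β; 0, q] * k ↔
      k = !![M 0 0, M 0 1 - β / q * M 1 1; 0, M 1 1 / q] ∧
        ‖q‖ = ‖M 1 1 / M 0 0‖ ∧ ‖M 0 1 * q / M 1 1 - β‖ ≤ 1 := by
  rw [Matrix.eq_upperTriangular_mul_iff hlow hq, and_comm]
  refine and_congr_right fun hk => ?_
  have hM : 0 < ‖M 0 0‖ := norm_pos_iff.mpr ha
  have hdiag : ‖M 1 1 / q‖ = ‖M 0 0‖ ↔ ‖q‖ = ‖M 1 1 / M 0 0‖ := by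
    rw [norm_div, norm_div, div_eq_iff (norm_ne_zero_iff.mpr hq), eq_div_iff hM.ne', mul_comm,
      eq_comm]
  have hupper : M 0 1 - β / q * M 1 1 = M 1 1 / q * (M 0 1 * q / M 1 1 - β) := by
    field_simp
  rw [hk, mem_KZMat_iff]
  simp only [Matrix.of_apply, Matrix.cons_val', Matrix.cons_val_zero, Matrix.cons_val_one,
    Matrix.empty_val', Matrix.cons_val_fin_one, hupper, norm_mul]
  constructor
  · rintro ⟨-, -, h11, h01⟩
    rw [h11] at h01
    exact ⟨hdiag.mp h11, (mul_le_iff_le_one_right hM).mp h01⟩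
  · rintro ⟨h11, h01⟩
    rw [← hdiag] at h11
    exact ⟨trivial, ha, h11, by rw [h11]; exact (mul_le_iff_le_one_right hM).mpr h01⟩

end Padic

open Padic in
/-- Every element of the Borel subgroup `B` of `GL_2(Q_p)` (an invertible upper
triangular matrix) can be written uniquely as `g_{β,δ} · k` with `β ∈ A`, `δ ∈ Z`
and `k ∈ KZ`, where `g_{β,δ} = [[1, β],[0, p^δ]]`: `B` is the disjoint union of
the cosets `g_{β,δ}·KZ` over `β ∈ A`, `δ ∈ Z`. -/
theorem borel_coset_decomposition (p : ℕ) [Fact p.Prime]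
    (M : Matrix (Fin 2) (Fin 2) ℚ_[p])
    (hlow : M 1 0 = 0) (ha : M 0 0 ≠ 0) (hd : M 1 1 ≠ 0) :
    ∃! t : ℚ_[p] × ℤ × Matrix (Fin 2) (Fin 2) ℚ_[p],
      t.1 ∈ repSet p ∧ t.2.2 ∈ KZMat p ∧
        M = !![1, t.1; 0, (p : ℚ_[p]) ^ t.2.1] * t.2.2 := by
  have hq (δ : ℤ) : (p : ℚ_[p]) ^ δ ≠ 0 := zpow_ne_zero δ natCast_prime_ne_zero
  obtain ⟨δ, hδ, hδ_unique⟩ := existsUnique_norm_zpow_eq (div_ne_zero hd ha)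
  obtain ⟨β, ⟨hβA, hβ⟩, hβ_unique⟩ :=
    existsUnique_mem_repSet_norm_sub_le_one (M 0 1 * (p : ℚ_[p]) ^ δ / M 1 1)
  refine ⟨(β, δ, !![M 0 0, M 0 1 - β / p ^ δ * M 1 1; 0, M 1 1 / p ^ δ]),
    ⟨hβA, (mem_KZMat_and_eq_mul_iff hlow ha hd (hq δ)).mpr ⟨rfl, hδ, hβ⟩⟩, ?_⟩
  rintro ⟨β', δ', k⟩ ⟨hβ'A, hk⟩
  dsimp only at hβ'A hk
  obtain ⟨rfl, hδ', hβ'⟩ := (mem_KZMat_and_eq_mul_iff hlow ha hd (hq δ')).mp hk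
  obtain rfl := hδ_unique δ' hδ'
  obtain rfl := hβ_unique β' ⟨hβ'A, hβ'⟩
  rfl
end

section
/- Let Π be a representation of B over E and let τ_k = [[1, -p^{-k}],[0,1]]. If v ≠ 0 is fixed by the subgroup [[1, Z_p],[0,1]] and k ≥ 0, then at least one of the p^k vectors v_ℓ = Σ_{j=0}^{p^k-1} C(j,ℓ)·τ_k^j(v) (0 ≤ ℓ ≤ p^k - 1) is nonzero and fixed by τ_k. -/
open Matrix

/-- The Borel subgroup `B` of upper triangular matrices in `GL_2(Q_p)`. -/
def BorelGL2 (p : ℕ) [Fact p.Prime] : Subgroup (GL (Fin 2) ℚ_[p]) where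
  carrier := {g | (g : Matrix (Fin 2) (Fin 2) ℚ_[p]) 1 0 = 0}
  one_mem' := by simp [Matrix.one_apply]
  mul_mem' := by
    intro a b ha hb
    simp only [Set.mem_setOf_eq] at ha hb ⊢
    show ((a : Matrix (Fin 2) (Fin 2) ℚ_[p]) * b) 1 0 = 0
    rw [Matrix.mul_apply, Fin.sum_univ_two, ha, hb]
    ring
  inv_mem' := by
    intro a ha
    simp only [Set.mem_setOf_eq] at ha ⊢
    rw [Matrix.coe_units_inv a, Matrix.inv_def, Matrix.adjugate_fin_two]
    simp [ha]

/-- The upper triangular element `[[a, b],[0, d]]` of the Borel subgroup. -/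
noncomputable def mkB (p : ℕ) [Fact p.Prime] (a d : ℚ_[p]ˣ) (b : ℚ_[p]) : BorelGL2 p :=
  ⟨Matrix.GeneralLinearGroup.mkOfDetNeZero !![(a : ℚ_[p]), b; 0, (d : ℚ_[p])]
      (by rw [Matrix.det_fin_two_of]; simp [mul_ne_zero a.ne_zero d.ne_zero]),
    by show (!![(a : ℚ_[p]), b; 0, (d : ℚ_[p])] : Matrix (Fin 2) (Fin 2) ℚ_[p]) 1 0 = 0; simp⟩

/-!
Write `N = p ^ k` and `T = ρ τ_k`. Since `τ_k ^ N = [[1, -1],[0,1]]` fixes `v`, we have `T ^ N v = v`.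
Pascal's rule turns the sums `v_ℓ = Σ_{j<N} C(j,ℓ) T^j v` into the recursion
`T v_0 = v_0` and `T v_{ℓ+1} + T v_ℓ = v_{ℓ+1}` for `ℓ + 1 < N`, the boundary terms vanishing
because `p ∣ C(p^k, ℓ+1)`. As `v_{N-1} = T^{N-1} v ≠ 0`, the first nonzero `v_ℓ` is fixed by `T`.
-/

namespace Module.End

variable {R M : Type*} [Ring R] [AddCommGroup M] [Module R M]

def binomialSum (T : Module.End R M) (v : M) (N ℓ : ℕ) : M :=
  ∑ j ∈ Finset.range N, (j.choose ℓ : R) • (T ^ j) v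

variable (T : Module.End R M) (v : M)

lemma apply_binomialSum (N ℓ : ℕ) :
    T (binomialSum T v N ℓ) = ∑ j ∈ Finset.range N, (j.choose ℓ : R) • (T ^ (j + 1)) v := by
  simp only [binomialSum, map_sum, map_smul, pow_succ', Module.End.mul_apply]

lemma binomialSum_succ_self (n : ℕ) : binomialSum T v (n + 1) n = (T ^ n) v := by
  rw [binomialSum, Finset.sum_range_succ, Nat.choose_self, Nat.cast_one, one_smul,
    add_eq_right]
  refine Finset.sum_eq_zero fun j hj => ?_
  rw [Nat.choose_eq_zero_of_lt (Finset.mem_range.1 hj), Nat.cast_zero, zero_smul]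

lemma apply_binomialSum_zero (N : ℕ) :
    T (binomialSum T v N 0) = binomialSum T v N 0 + (T ^ N) v - v := by
  have h := Finset.sum_range_succ' (fun j => (T ^ j) v) N
  rw [Finset.sum_range_succ, pow_zero, Module.End.one_apply] at h
  rw [apply_binomialSum]
  simp only [binomialSum, Nat.choose_zero_right, Nat.cast_one, one_smul]
  rw [eq_sub_iff_add_eq, ← h]

lemma apply_binomialSum_succ_add (N m : ℕ) :
    T (binomialSum T v N (m + 1)) + T (binomialSum T v N m) =
      binomialSum T v N (m + 1) + (N.choose (m + 1) : R) • (T ^ N) v := by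
  let g : ℕ → M := fun j => (j.choose (m + 1) : R) • (T ^ j) v
  have h := Finset.sum_range_succ' g N
  rw [Finset.sum_range_succ] at h
  simp only [g, Nat.choose_zero_succ, Nat.cast_zero, zero_smul, add_zero] at h
  rw [apply_binomialSum, apply_binomialSum, ← Finset.sum_add_distrib, binomialSum, h]
  refine Finset.sum_congr rfl fun j _ => ?_
  rw [← add_smul, Nat.choose_succ_succ', Nat.cast_add, add_comm (j.choose (m + 1) : R)]

theorem exists_binomialSum_ne_zero_and_apply_eq {p : ℕ} [Fact p.Prime] [CharP R p] (k : ℕ)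
    (hTv : (T ^ p ^ k) v = v) (hv : v ≠ 0) :
    ∃ ℓ < p ^ k, binomialSum T v (p ^ k) ℓ ≠ 0 ∧
      T (binomialSum T v (p ^ k) ℓ) = binomialSum T v (p ^ k) ℓ := by
  classical
  obtain ⟨n, hn⟩ : ∃ n, p ^ k = n + 1 :=
    Nat.exists_eq_add_one.2 (pow_pos (Fact.out : p.Prime).pos k)
  have hlast : binomialSum T v (p ^ k) n ≠ 0 := by
    rw [hn, binomialSum_succ_self]
    intro h
    apply hv
    rw [← hTv, hn, pow_succ', Module.End.mul_apply, h, map_zero]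
  have hex : ∃ ℓ, binomialSum T v (p ^ k) ℓ ≠ 0 := ⟨n, hlast⟩
  have hlt : Nat.find hex < p ^ k := (Nat.find_min' hex hlast).trans_lt (by omega)
  refine ⟨Nat.find hex, hlt, Nat.find_spec hex, ?_⟩
  cases hℓ : Nat.find hex with
  | zero => rw [apply_binomialSum_zero, hTv, add_sub_cancel_right]
  | succ m =>
    have hm : binomialSum T v (p ^ k) m = 0 := not_not.1 (Nat.find_min hex (by omega))
    have hchoose : ((p ^ k).choose (m + 1) : R) = 0 :=
      (CharP.cast_eq_zero_iff R p _).2 <|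
        (Fact.out : p.Prime).dvd_choose_pow m.succ_ne_zero (by omega : m + 1 ≠ p ^ k)
    simpa [hm, hchoose] using apply_binomialSum_succ_add T v (p ^ k) m

end Module.End

lemma mkB_one_one_mul (p : ℕ) [Fact p.Prime] (b c : ℚ_[p]) :
    mkB p 1 1 b * mkB p 1 1 c = mkB p 1 1 (b + c) := by
  apply Subtype.ext
  apply Units.ext
  rw [Subgroup.coe_mul, Units.val_mul]
  show !![(1 : ℚ_[p]), b; 0, 1] * !![(1 : ℚ_[p]), c; 0, 1] = !![(1 : ℚ_[p]), b + c; 0, 1]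
  rw [Matrix.mul_fin_two]
  norm_num [add_comm]

lemma mkB_one_one_zero (p : ℕ) [Fact p.Prime] : mkB p 1 1 0 = 1 := by
  apply Subtype.ext
  apply Units.ext
  show !![(1 : ℚ_[p]), 0; 0, 1] = 1
  rw [Matrix.one_fin_two]

lemma mkB_one_one_pow (p : ℕ) [Fact p.Prime] (b : ℚ_[p]) (n : ℕ) :
    mkB p 1 1 b ^ n = mkB p 1 1 (n • b) := by
  induction n with
  | zero => rw [pow_zero, zero_smul, mkB_one_one_zero]
  | succ n ih => rw [pow_succ, ih, mkB_one_one_mul, succ_nsmul]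

lemma mkB_one_one_pow_prime_pow (p : ℕ) [Fact p.Prime] (k : ℕ) :
    mkB p 1 1 (-(p : ℚ_[p]) ^ (-(k : ℤ))) ^ p ^ k = mkB p 1 1 (-1) := by
  have hp : (p : ℚ_[p]) ≠ 0 := Nat.cast_ne_zero.2 (Fact.out : p.Prime).ne_zero
  rw [mkB_one_one_pow, nsmul_eq_mul, Nat.cast_pow, mul_neg, ← zpow_natCast,
    ← zpow_add₀ hp, add_neg_cancel, zpow_zero]

/-- Let `Π` be an `E`-linear representation `ρ` of the Borel `B` of `GL_2(Q_p)`
(`E` of characteristic `p`) and `τ_k = [[1, -p^{-k}],[0,1]]`. If `v ≠ 0` is fixed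
by the subgroup `[[1, Z_p],[0,1]]` and `k ≥ 0`, then at least one of the `p^k`
vectors `v_ℓ = Σ_{j=0}^{p^k-1} C(j,ℓ)·τ_k^j(v)`, `0 ≤ ℓ ≤ p^k - 1`, is nonzero
and fixed by `τ_k`. -/
theorem exists_nonzero_tau_fixed (p : ℕ) [Fact p.Prime]
    (E : Type*) [Field E] [CharP E p]
    (V : Type*) [AddCommGroup V] [Module E V]
    (ρ : Representation E (BorelGL2 p) V) (k : ℕ) (v : V) (hv : v ≠ 0)
    (hfix : ∀ t : ℚ_[p], ‖t‖ ≤ 1 → ρ (mkB p 1 1 t) v = v) :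
    ∃ ℓ < p ^ k,
      (∑ j ∈ Finset.range (p ^ k),
          ((j.choose ℓ : E)) • ρ ((mkB p 1 1 (-(p : ℚ_[p]) ^ (-(k : ℤ)))) ^ j) v) ≠ 0 ∧
      ρ (mkB p 1 1 (-(p : ℚ_[p]) ^ (-(k : ℤ))))
          (∑ j ∈ Finset.range (p ^ k),
            ((j.choose ℓ : E)) • ρ ((mkB p 1 1 (-(p : ℚ_[p]) ^ (-(k : ℤ)))) ^ j) v)
        = ∑ j ∈ Finset.range (p ^ k),
            ((j.choose ℓ : E)) • ρ ((mkB p 1 1 (-(p : ℚ_[p]) ^ (-(k : ℤ)))) ^ j) v := by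
  have hτ : (ρ (mkB p 1 1 (-(p : ℚ_[p]) ^ (-(k : ℤ)))) ^ p ^ k) v = v := by
    rw [← map_pow, mkB_one_one_pow_prime_pow]
    exact hfix (-1) (by simp)
  simpa only [Module.End.binomialSum, map_pow] using
    Module.End.exists_binomialSum_ne_zero_and_apply_eq _ v k hτ hv
end

section
/- For an integer 1 ≤ h ≤ p^n - 2, the following are equivalent: (a) there is no proper divisor d of n such that (p^n-1)/(p^d-1) divides h; (b) writing h = e_{n-1}⋯e_1e_0 in base p, the map i ↦ e_i from Z/nZ to {0,…,p-1} has no period strictly smaller than n. -/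
/-!
Cyclically shifting the `n` base-`p` digits of `h < p ^ n` down by `d` places is multiplication
by `p ^ (n - d)` modulo `p ^ n - 1`. Hence `d` is a period of the digits exactly when
`p ^ n - 1 ∣ h * (p ^ (n - d) - 1)`, i.e. when `(p ^ n - 1) / (p ^ gcd n d - 1) ∣ h`, because
`gcd (p ^ a - 1) (p ^ b - 1) = p ^ gcd a b - 1`. A period `d < n` thus yields the proper divisor
`gcd n d` of `n`, and a proper divisor of `n` is itself a period.
-/

theorem Nat.dvd_mul_iff_div_gcd_dvd {a b c : ℕ} (ha : 0 < a) :
    a ∣ b * c ↔ a / a.gcd c ∣ b := by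
  have hg : 0 < a.gcd c := Nat.gcd_pos_of_pos_left c ha
  have hcop := Nat.coprime_div_gcd_div_gcd hg
  set g := a.gcd c
  obtain ⟨a', ha'⟩ : g ∣ a := Nat.gcd_dvd_left a c
  obtain ⟨c', hc'⟩ : g ∣ c := Nat.gcd_dvd_right a c
  rw [Nat.div_eq_of_eq_mul_right hg ha', Nat.div_eq_of_eq_mul_right hg hc'] at hcop
  rw [Nat.div_eq_of_eq_mul_right hg ha', ha', hc', mul_left_comm, Nat.mul_dvd_mul_iff_left hg]
  exact hcop.dvd_mul_right

section Digits

variable {p a b i k : ℕ}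

theorem mod_pow_eq_of_digits_eq (hab : ∀ i < k, a / p ^ i % p = b / p ^ i % p) :
    a % p ^ k = b % p ^ k := by
  induction k with
  | zero => simp [Nat.mod_one]
  | succ k ih =>
    rw [Nat.mod_pow_succ, Nat.mod_pow_succ, ih fun i hi => hab i (by omega),
      hab k k.lt_succ_self]

theorem mod_pow_div_pow_mod (hik : i < k) : a % p ^ k / p ^ i % p = a / p ^ i % p := by
  rw [← Nat.add_sub_cancel' hik.le, pow_add, Nat.mod_mul_right_div_self,
    Nat.mod_mod_of_dvd _ (dvd_pow_self p (by omega))]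

theorem add_mul_pow_div_pow_mod_of_lt (hp : 0 < p) (hik : i < k) :
    (a + b * p ^ k) / p ^ i % p = a / p ^ i % p := by
  obtain ⟨j, rfl⟩ := Nat.exists_eq_add_of_lt hik
  rw [show b * p ^ (i + j + 1) = b * p ^ j * p * p ^ i by ring,
    Nat.add_mul_div_right _ _ (pow_pos hp i), Nat.add_mul_mod_self_right]

theorem add_mul_pow_div_pow_mod_of_le (hp : 0 < p) (ha : a < p ^ k) (hki : k ≤ i) :
    (a + b * p ^ k) / p ^ i % p = b / p ^ (i - k) % p := by
  rw [← Nat.add_sub_cancel' hki, pow_add, ← Nat.div_div_eq_div_mul,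
    Nat.add_mul_div_right _ _ (pow_pos hp k), Nat.div_eq_of_lt ha, zero_add,
    Nat.add_sub_cancel_left]

end Digits

def IsDigitPeriod (p n h d : ℕ) : Prop :=
  ∀ i < n, h / p ^ ((i + d) % n) % p = h / p ^ i % p

def rotateDigits (p n d h : ℕ) : ℕ := h / p ^ d + h % p ^ d * p ^ (n - d)

section rotateDigits

variable {p n d h : ℕ}

theorem rotateDigits_div_pow_mod (hp : 0 < p) (hh : h < p ^ n) (hd : d ≤ n) {i : ℕ}
    (hi : i < n) : rotateDigits p n d h / p ^ i % p = h / p ^ ((i + d) % n) % p := by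
  rcases lt_or_ge i (n - d) with hi' | hi'
  · rw [rotateDigits, add_mul_pow_div_pow_mod_of_lt hp hi', Nat.div_div_eq_div_mul, ← pow_add,
      Nat.mod_eq_of_lt (by omega : i + d < n), add_comm]
  · have hq : h / p ^ d < p ^ (n - d) :=
      Nat.div_lt_of_lt_mul (by rwa [← pow_add, Nat.add_sub_cancel' hd])
    have hwrap : (i + d) % n = i - (n - d) := by
      rw [Nat.mod_eq_sub_mod (by omega), Nat.mod_eq_of_lt (by omega)]
      omega
    rw [rotateDigits, add_mul_pow_div_pow_mod_of_le hp hq hi', mod_pow_div_pow_mod (by omega),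
      hwrap]

theorem rotateDigits_lt (hp : 0 < p) (hh : h < p ^ n) (hd : d ≤ n) :
    rotateDigits p n d h < p ^ n := by
  have hq : h / p ^ d < p ^ (n - d) :=
    Nat.div_lt_of_lt_mul (by rwa [← pow_add, Nat.add_sub_cancel' hd])
  calc rotateDigits p n d h < p ^ (n - d) + h % p ^ d * p ^ (n - d) := by
        rw [rotateDigits]; omega
    _ = (h % p ^ d + 1) * p ^ (n - d) := by ring
    _ ≤ p ^ d * p ^ (n - d) := Nat.mul_le_mul_right _ (Nat.mod_lt _ (pow_pos hp d))
    _ = p ^ n := by rw [← pow_add, Nat.add_sub_cancel' hd]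

theorem isDigitPeriod_iff_rotateDigits_eq (hp : 0 < p) (hh : h < p ^ n) (hd : d ≤ n) :
    IsDigitPeriod p n h d ↔ rotateDigits p n d h = h := by
  refine ⟨fun hper => ?_, fun heq i hi => by rw [← rotateDigits_div_pow_mod hp hh hd hi, heq]⟩
  calc rotateDigits p n d h = rotateDigits p n d h % p ^ n :=
        (Nat.mod_eq_of_lt (rotateDigits_lt hp hh hd)).symm
    _ = h % p ^ n := mod_pow_eq_of_digits_eq fun i hi =>
        (rotateDigits_div_pow_mod hp hh hd hi).trans (hper i hi)
    _ = h := Nat.mod_eq_of_lt hh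

theorem rotateDigits_modEq (hp : 0 < p) (hd : d ≤ n) :
    rotateDigits p n d h ≡ h * p ^ (n - d) [MOD p ^ n - 1] := by
  have hpn : p ^ n ≡ 1 [MOD p ^ n - 1] := Nat.modEq_sub (Nat.one_le_pow _ _ hp)
  calc rotateDigits p n d h = h / p ^ d * 1 + h % p ^ d * p ^ (n - d) := by rw [mul_one]; rfl
    _ ≡ h / p ^ d * p ^ n + h % p ^ d * p ^ (n - d) [MOD p ^ n - 1] :=
        (hpn.symm.mul_left _).add_right _
    _ = h * p ^ (n - d) := by
        conv_rhs => rw [← Nat.div_add_mod' h (p ^ d)]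
        rw [add_mul, mul_assoc, ← pow_add, Nat.add_sub_cancel' hd]

theorem rotateDigits_eq_iff_modEq (hp : 0 < p) (hh : h < p ^ n - 1) (hd : d ≤ n) :
    rotateDigits p n d h = h ↔ h * p ^ (n - d) ≡ h [MOD p ^ n - 1] := by
  refine ⟨fun heq => ?_, fun hmod => ?_⟩
  · simpa only [heq] using (rotateDigits_modEq hp hd (h := h)).symm
  have hrot : rotateDigits p n d h ≡ h [MOD p ^ n - 1] := (rotateDigits_modEq hp hd).trans hmod
  have hle : rotateDigits p n d h ≤ p ^ n - 1 := by
    have := rotateDigits_lt hp (by omega : h < p ^ n) hd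
    omega
  rcases hle.lt_or_eq with hlt | hmax
  · exact hrot.eq_of_lt_of_lt hlt hh
  · -- the all-`(p - 1)` digit string is only congruent to `0`, which is its own rotation
    have h0 : h = 0 := by
      have := hrot
      rwa [Nat.ModEq, hmax, Nat.mod_self, Nat.mod_eq_of_lt hh, eq_comm] at this
    subst h0
    simp only [rotateDigits, Nat.zero_div, Nat.zero_mod, zero_mul, add_zero] at hmax
    omega

end rotateDigits

theorem isDigitPeriod_iff_dvd {p n h d : ℕ} (hh : h < p ^ n - 1) (hd : d ≤ n) :
    IsDigitPeriod p n h d ↔ (p ^ n - 1) / (p ^ n.gcd d - 1) ∣ h := by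
  have hp : 0 < p := Nat.pos_of_ne_zero (by rintro rfl; cases n <;> simp at hh)
  rw [isDigitPeriod_iff_rotateDigits_eq hp (by omega) hd, rotateDigits_eq_iff_modEq hp hh hd,
    Nat.ModEq.comm, Nat.modEq_iff_dvd' (Nat.le_mul_of_pos_right _ (pow_pos hp _)),
    ← Nat.mul_sub_one, Nat.dvd_mul_iff_div_gcd_dvd (by omega), Nat.pow_sub_one_gcd_pow_sub_one,
    Nat.gcd_self_sub_right hd]

theorem primitive_iff_digits_aperiodic_general (p n h : ℕ) (h1 : 1 ≤ h) (h2 : h ≤ p ^ n - 2) :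
    (¬ ∃ d, d ∣ n ∧ d < n ∧ ((p ^ n - 1) / (p ^ d - 1)) ∣ h) ↔
    (¬ ∃ d, 0 < d ∧ d < n ∧ ∀ i < n, h / p ^ ((i + d) % n) % p = h / p ^ i % p) := by
  have hh : h < p ^ n - 1 := by omega
  refine not_congr ⟨fun ⟨d, hdn, hlt, hdvd⟩ => ?_, fun ⟨d, hd, hlt, hper⟩ => ?_⟩
  · have hd : 0 < d :=
      Nat.pos_of_ne_zero (by rintro rfl; exact hlt.ne' (Nat.eq_zero_of_zero_dvd hdn))
    refine ⟨d, hd, hlt, (isDigitPeriod_iff_dvd hh hlt.le).2 ?_⟩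
    rwa [Nat.gcd_eq_right hdn]
  · have hgcd : n.gcd d < n := (Nat.le_of_dvd hd (Nat.gcd_dvd_right n d)).trans_lt hlt
    exact ⟨n.gcd d, Nat.gcd_dvd_left n d, hgcd, (isDigitPeriod_iff_dvd hh hlt.le).1 hper⟩

/-- For `1 ≤ h ≤ p^n - 2`, the following are equivalent: (a) there is no proper
divisor `d` of `n` such that `(p^n-1)/(p^d-1)` divides `h`; (b) writing `h` in
base `p`, the map `i ↦ e_i` (the `i`-th digit, viewed on `Z/nZ`) has no period
strictly smaller than `n`. -/
theorem primitive_iff_digits_aperiodic (p n h : ℕ) [Fact p.Prime] (hn : 1 ≤ n)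
    (h1 : 1 ≤ h) (h2 : h ≤ p ^ n - 2) :
    (¬ ∃ d, d ∣ n ∧ d < n ∧ ((p ^ n - 1) / (p ^ d - 1)) ∣ h) ↔
    (¬ ∃ d, 0 < d ∧ d < n ∧ ∀ i < n, h / p ^ ((i + d) % n) % p = h / p ^ i % p) :=
  primitive_iff_digits_aperiodic_general p n h h1 h2
end

section
/- Let X = lim← X_i be a profinite E-linear representation of a topological group G that is topologically irreducible (no closed G-invariant subspace other than 0 and X). Then the smooth dual X* (continuous linear forms with contragredient action) is an irreducible representation of G; the proof uses that (X*)* is naturally isomorphic to X. -/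
/-!
Let `W ⊆ X` be the common kernel of a `G`-stable subspace `Λ ⊆ X*`. It is closed and `G`-stable,
so `W = X` (and then `Λ = 0`) or `W = 0`. In the latter case every `f ∈ X*` lies in `Λ`: the
support `{f ≠ 0}` is clopen, hence compact, so it is covered by the supports of finitely many
`l₁, …, lₙ ∈ Λ`; then `⋂ ker lᵢ ⊆ ker f`, which puts `f` in the span of the `lᵢ`.
-/

open Set

namespace ContinuousLinearMap

variable {K M : Type*} [Field K] [TopologicalSpace K] [AddCommGroup M] [Module K M]
  [TopologicalSpace M]

theorem exists_finite_biInf_ker_le_ker [DiscreteTopology K] [CompactSpace M]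
    {s : Set (M →L[K] K)} {f : M →L[K] K}
    (hf : ⨅ l ∈ s, LinearMap.ker (l : M →ₗ[K] K) ≤ LinearMap.ker (f : M →ₗ[K] K)) :
    ∃ t ⊆ s, t.Finite ∧
      ⨅ l ∈ t, LinearMap.ker (l : M →ₗ[K] K) ≤ LinearMap.ker (f : M →ₗ[K] K) := by
  have hsupp : IsCompact {x | f x ≠ 0} :=
    ((isClosed_discrete {0}ᶜ).preimage f.continuous).isCompact
  have hcover : {x | f x ≠ 0} ⊆ ⋃ l ∈ s, {x | l x ≠ 0} := by
    intro x hfx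
    by_contra hx
    simp only [mem_iUnion, not_exists] at hx
    exact hfx (hf (by simpa [Submodule.mem_iInf] using hx))
  obtain ⟨t, hts, ht, hcover'⟩ := hsupp.elim_finite_subcover_image
    (fun l _ => (isOpen_discrete {0}ᶜ).preimage l.continuous) hcover
  refine ⟨t, hts, ht, fun x hx => ?_⟩
  by_contra hfx
  obtain ⟨l, hlt, hlx⟩ := mem_iUnion₂.1 (hcover' hfx)
  exact hlx (by simpa using (Submodule.mem_iInf _).1 ((Submodule.mem_iInf _).1 hx l) hlt)

variable [IsTopologicalRing K]

theorem mem_span_of_biInf_ker_le_ker {t : Set (M →L[K] K)} (ht : t.Finite) {f : M →L[K] K}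
    (hf : ⨅ l ∈ t, LinearMap.ker (l : M →ₗ[K] K) ≤ LinearMap.ker (f : M →ₗ[K] K)) :
    f ∈ Submodule.span K t := by
  have : Finite t := ht
  have hspan : (f : M →ₗ[K] K) ∈ Submodule.span K (range fun l : t => (l : M →ₗ[K] K)) :=
    mem_span_of_iInf_ker_le_ker (by rwa [iInf_subtype'] at hf)
  rw [show (range fun l : t => (l : M →ₗ[K] K)) = coeLM K '' t by ext; simp,
    Submodule.span_image] at hspan
  obtain ⟨g, hg, hgf⟩ := hspan
  rwa [coe_injective hgf] at hg

end ContinuousLinearMap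

namespace Submodule

variable {K M : Type*} [Field K] [TopologicalSpace K] [AddCommGroup M] [Module K M]
  [TopologicalSpace M] [IsTopologicalRing K]

def topDualCoannihilator (Λ : Submodule K (M →L[K] K)) : Submodule K M :=
  ⨅ f ∈ Λ, LinearMap.ker (f : M →ₗ[K] K)

variable {Λ : Submodule K (M →L[K] K)}

theorem mem_topDualCoannihilator {x : M} : x ∈ Λ.topDualCoannihilator ↔ ∀ f ∈ Λ, f x = 0 := by
  simp [topDualCoannihilator, mem_iInf]

theorem isClosed_topDualCoannihilator [T1Space K] (Λ : Submodule K (M →L[K] K)) :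
    IsClosed (Λ.topDualCoannihilator : Set M) := by
  simp only [topDualCoannihilator, coe_iInf]
  exact isClosed_biInter fun f _ => f.isClosed_ker

theorem topDualCoannihilator_eq_top_iff : Λ.topDualCoannihilator = ⊤ ↔ Λ = ⊥ := by
  simp only [eq_top_iff', Submodule.eq_bot_iff, mem_topDualCoannihilator,
    ContinuousLinearMap.ext_iff, zero_apply]
  exact ⟨fun h f hf x => h x f hf, fun h x f hf => h f hf x⟩

theorem apply_mem_topDualCoannihilator {T : M →L[K] M} (hT : ∀ f ∈ Λ, f.comp T ∈ Λ) {x : M}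
    (hx : x ∈ Λ.topDualCoannihilator) : T x ∈ Λ.topDualCoannihilator :=
  mem_topDualCoannihilator.2 fun f hf => mem_topDualCoannihilator.1 hx _ (hT f hf)

theorem eq_top_of_topDualCoannihilator_eq_bot [DiscreteTopology K] [CompactSpace M]
    (h : Λ.topDualCoannihilator = ⊥) : Λ = ⊤ := by
  refine eq_top_iff.2 fun f _ => ?_
  have hf : Λ.topDualCoannihilator ≤ LinearMap.ker (f : M →ₗ[K] K) := h.le.trans bot_le
  obtain ⟨t, htΛ, ht, htf⟩ := ContinuousLinearMap.exists_finite_biInf_ker_le_ker hf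
  exact span_le.2 htΛ (ContinuousLinearMap.mem_span_of_biInf_ker_le_ker ht htf)

end Submodule

theorem dual_of_topologically_irreducible_is_irreducible_general
    (E : Type*) [Field E] [TopologicalSpace E] [DiscreteTopology E]
    (G : Type*) [Group G]
    (X : Type*) [AddCommGroup X] [Module E X] [TopologicalSpace X]
    [CompactSpace X]
    (ρ : G →* (X →L[E] X)ˣ)
    (hirr : ∀ W : Submodule E X, IsClosed (W : Set X) →
      (∀ g : G, ∀ x ∈ W, (ρ g : X →L[E] X) x ∈ W) → W = ⊥ ∨ W = ⊤) :
    ∀ Λ : Submodule E (X →L[E] E),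
      (∀ g : G, ∀ f ∈ Λ, f.comp ((ρ g⁻¹ : X →L[E] X)) ∈ Λ) → Λ = ⊥ ∨ Λ = ⊤ := by
  intro Λ hΛ
  have hstable : ∀ g : G, ∀ x ∈ Λ.topDualCoannihilator,
      (ρ g : X →L[E] X) x ∈ Λ.topDualCoannihilator := fun g _ =>
    Submodule.apply_mem_topDualCoannihilator (by simpa using hΛ g⁻¹)
  rcases hirr _ Λ.isClosed_topDualCoannihilator hstable with h | h
  · exact Or.inr (Submodule.eq_top_of_topDualCoannihilator_eq_bot h)
  · exact Or.inl (Submodule.topDualCoannihilator_eq_top_iff.1 h)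

/-- Let `X` be a profinite `E`-linear representation of a topological group `G`
(`E` a finite, discrete field; `X` compact, Hausdorff, totally disconnected
topological `E`-vector space with continuous linear `G`-action `ρ`, acting by
topological automorphisms). If `X` is topologically irreducible (its only closed
`G`-invariant subspaces are `0` and `X`), then the dual `X*` of continuous
linear forms, with the contragredient action `(g · f)(x) = f(g⁻¹ x)`, is an
irreducible representation of `G`. -/
theorem dual_of_topologically_irreducible_is_irreducible
    (E : Type*) [Field E] [Fintype E] [TopologicalSpace E] [DiscreteTopology E]
    (G : Type*) [Group G] [TopologicalSpace G] [IsTopologicalGroup G]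
    (X : Type*) [AddCommGroup X] [Module E X] [TopologicalSpace X]
    [IsTopologicalAddGroup X] [ContinuousSMul E X]
    [CompactSpace X] [T2Space X] [TotallyDisconnectedSpace X] [Nontrivial X]
    (ρ : G →* (X →L[E] X)ˣ)
    (hcont : Continuous fun gx : G × X => (ρ gx.1 : X →L[E] X) gx.2)
    (hirr : ∀ W : Submodule E X, IsClosed (W : Set X) →
      (∀ g : G, ∀ x ∈ W, (ρ g : X →L[E] X) x ∈ W) → W = ⊥ ∨ W = ⊤) :
    ∀ Λ : Submodule E (X →L[E] E),
      (∀ g : G, ∀ f ∈ Λ, f.comp ((ρ g⁻¹ : X →L[E] X)) ∈ Λ) → Λ = ⊥ ∨ Λ = ⊤ :=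
  dual_of_topologically_irreducible_is_irreducible_general E G X ρ hirr
end
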